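/- arXiv:1709.02333 — 4 statements merged into one kernel-verified Lean document; each statement's English description precedes it below -/
import Mathlib

section
/- Let n ∈ ℤ₊, let ω ∈ ℝⁿ be rationally independent, and let G: 𝕋ⁿ → 𝕋ⁿ be a continuous map satisfying G(x + tω) = G(x) − tω for all x ∈ 𝕋ⁿ and all t ∈ ℝ (i.e. G reverses the quasi-periodic flow x ↦ x + tω). Then G(x) = G(0) − x for all x ∈ 𝕋ⁿ; in particular G is an involution, and its fixed point set {x ∈ 𝕋ⁿ : G(x) = x} = {x ∈ 𝕋ⁿ : 2x = G(0)} consists of exactly 2ⁿ isolated points. (Equivalently, after a shift of the origin the involution G takes the form x ↦ −x, whose fixed points are the 2ⁿ points (x₁,…,xₙ) with each xᵢ equal to 0 or π.) -/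
open scoped BigOperators

/-- The `n`-torus `(ℝ/2πℤ)ⁿ`. -/
abbrev Torus (n : ℕ) := Fin n → AddCircle (2 * Real.pi)

/-- A vector `ω ∈ ℝⁿ` is rationally independent if `⟨ω,k⟩ ≠ 0` for all `k ∈ ℤⁿ \ {0}`. -/
def RationallyIndependent {n : ℕ} (ω : Fin n → ℝ) : Prop :=
  ∀ k : Fin n → ℤ, k ≠ 0 → (∑ i, (k i : ℝ) * ω i) ≠ 0

/-- The element `tω` of the torus, for `t ∈ ℝ` and `ω ∈ ℝⁿ`. -/
noncomputable def torusVec {n : ℕ} (ω : Fin n → ℝ) (t : ℝ) : Torus n :=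
  fun i => ((t * ω i : ℝ) : AddCircle (2 * Real.pi))

/-!
The map `x ↦ G x + x` is invariant under the flow, since `G (x + tω) + (x + tω) = G x + x`.
Weyl's argument shows that a continuous flow-invariant function `f` is constant: it equals its own
time averages along orbits, it is a uniform limit of trigonometric polynomials, and the time
averages of a character `χ_k` with `k ≠ 0` tend to `0` because `⟨k, ω⟩ ≠ 0`. Hence
`G x = G 0 - x`, and the fixed points are the solutions of `2x = G 0`, two in each coordinate.
-/

open Complex Filter Topology

instance : Fact (0 < 2 * Real.pi) := ⟨Real.two_pi_pos⟩

lemma tendsto_inv_mul_integral_exp_mul_I {a : ℝ} (ha : a ≠ 0) :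
    Tendsto (fun T : ℝ => (T : ℂ)⁻¹ * ∫ t in (0 : ℝ)..T, exp (a * I * t)) atTop (𝓝 0) := by
  have haI : (a : ℂ) * I ≠ 0 := mul_ne_zero (ofReal_ne_zero.mpr ha) I_ne_zero
  have hbound : ∀ T : ℝ, 0 < T →
      ‖(T : ℂ)⁻¹ * ∫ t in (0 : ℝ)..T, exp (a * I * t)‖ ≤ 2 / |a| * T⁻¹ := by
    intro T hT
    rw [integral_exp_mul_complex haI, norm_mul, norm_div, norm_inv, norm_real,
      Real.norm_of_nonneg hT.le, norm_mul, norm_I, mul_one, norm_real, Real.norm_eq_abs, mul_comm]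
    gcongr
    calc ‖exp (a * I * T) - exp (a * I * (0 : ℝ))‖
        ≤ ‖exp (a * I * T)‖ + ‖exp (a * I * (0 : ℝ))‖ := norm_sub_le _ _
      _ = 2 := by
        rw [mul_right_comm, ← ofReal_mul, mul_right_comm, ← ofReal_mul, norm_exp_ofReal_mul_I,
          norm_exp_ofReal_mul_I]
        norm_num
  refine squeeze_zero_norm' (eventually_gt_atTop 0 |>.mono hbound) ?_
  simpa using tendsto_inv_atTop_zero.const_mul (2 / |a|)

namespace UnitAddTorus

variable {d : Type*} (ω : d → ℝ)

noncomputable def linearFlow (t : ℝ) : UnitAddTorus d :=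
  fun i => ((t * ω i : ℝ) : UnitAddCircle)

@[fun_prop]
lemma continuous_linearFlow : Continuous (linearFlow ω) :=
  continuous_pi fun _ => (AddCircle.continuous_mk' 1).comp (by fun_prop)

lemma mFourier_add_linearFlow [Fintype d] (k : d → ℤ) (x : UnitAddTorus d) (t : ℝ) :
    mFourier k (x + linearFlow ω t)
      = exp (↑(2 * Real.pi * ∑ i, k i * ω i) * I * t) * mFourier k x := by
  simp only [mFourier, ContinuousMap.coe_mk, Pi.add_apply, linearFlow, fourier_apply, smul_add,
    AddCircle.toCircle_add, Circle.coe_mul, Finset.prod_mul_distrib]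
  rw [mul_comm]
  congr 1
  simp only [← fourier_apply, fourier_coe_apply, ← exp_sum]
  congr 1
  push_cast
  rw [Finset.mul_sum, Finset.sum_mul, Finset.sum_mul]
  refine Finset.sum_congr rfl fun i _ => ?_
  ring

noncomputable def flowAverage (x : UnitAddTorus d) (T : ℝ) :
    C(UnitAddTorus d, ℂ) →ₗ[ℂ] ℂ where
  toFun g := (T : ℂ)⁻¹ * ∫ t in (0 : ℝ)..T, g (x + linearFlow ω t)
  map_add' f g := by
    rw [← mul_add, ← intervalIntegral.integral_add
      ((by fun_prop : Continuous _).intervalIntegrable _ _)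
      ((by fun_prop : Continuous _).intervalIntegrable _ _)]
    rfl
  map_smul' c g := by
    simp only [ContinuousMap.smul_apply, smul_eq_mul, intervalIntegral.integral_const_mul,
      RingHom.id_apply]
    ring

lemma flowAverage_apply (x : UnitAddTorus d) (T : ℝ) (g : C(UnitAddTorus d, ℂ)) :
    flowAverage ω x T g = (T : ℂ)⁻¹ * ∫ t in (0 : ℝ)..T, g (x + linearFlow ω t) := rfl

lemma flowAverage_of_invariant {f : C(UnitAddTorus d, ℂ)}
    (hf : ∀ x t, f (x + linearFlow ω t) = f x) (x : UnitAddTorus d) {T : ℝ} (hT : T ≠ 0) :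
    flowAverage ω x T f = f x := by
  simp only [flowAverage_apply, hf, intervalIntegral.integral_const, sub_zero, real_smul]
  exact inv_mul_cancel_left₀ (ofReal_ne_zero.mpr hT) _

lemma norm_flowAverage_le (x : UnitAddTorus d) {T : ℝ} (hT : 0 ≤ T) (g : C(UnitAddTorus d, ℂ)) :
    ‖flowAverage ω x T g‖ ≤ ‖g‖ := by
  rcases hT.eq_or_lt with rfl | hT
  · simp [flowAverage_apply]
  rw [flowAverage_apply, norm_mul, norm_inv, norm_real, Real.norm_of_nonneg hT.le,
    inv_mul_le_iff₀ hT]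
  simpa [abs_of_pos hT, mul_comm] using intervalIntegral.norm_integral_le_of_norm_le_const
    (a := 0) (b := T) fun t _ => g.norm_coe_le_norm (x + linearFlow ω t)

lemma tendsto_flowAverage_mFourier [Fintype d] {k : d → ℤ} (hk : ∑ i, k i * ω i ≠ 0)
    (x : UnitAddTorus d) :
    Tendsto (fun T => flowAverage ω x T (mFourier k)) atTop (𝓝 0) := by
  have h := (tendsto_inv_mul_integral_exp_mul_I (a := 2 * Real.pi * ∑ i, k i * ω i)
    (by positivity)).mul_const (mFourier k x)
  simp only [zero_mul] at h
  refine h.congr fun T => ?_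
  simp only [flowAverage_apply, mFourier_add_linearFlow, intervalIntegral.integral_mul_const]
  ring

lemma exists_tendsto_flowAverage_of_mem_span {n : ℕ} {ω : Fin n → ℝ}
    (hω : RationallyIndependent ω)
    {g : C(UnitAddTorus (Fin n), ℂ)} (hg : g ∈ Submodule.span ℂ (Set.range mFourier)) :
    ∃ c, ∀ x, Tendsto (fun T => flowAverage ω x T g) atTop (𝓝 c) := by
  induction hg using Submodule.span_induction with
  | mem g hg =>
    obtain ⟨k, rfl⟩ := hg
    by_cases hk : k = 0
    · subst hk
      refine ⟨1, fun x => tendsto_const_nhds.congr' ?_⟩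
      filter_upwards [eventually_ne_atTop 0] with T hT
      rw [flowAverage_of_invariant ω (fun _ _ => by simp [mFourier_zero]) x hT, mFourier_zero,
        ContinuousMap.one_apply]
    · exact ⟨0, tendsto_flowAverage_mFourier ω (hω k hk)⟩
  | zero => exact ⟨0, fun x => by simp⟩
  | add f g _ _ hf hg =>
    obtain ⟨c, hc⟩ := hf
    obtain ⟨c', hc'⟩ := hg
    exact ⟨c + c', fun x => by simpa using (hc x).add (hc' x)⟩
  | smul a g _ hg =>
    obtain ⟨c, hc⟩ := hg
    exact ⟨a * c, fun x => by simpa using (hc x).const_mul a⟩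

lemma eq_of_forall_add_linearFlow_eq {n : ℕ} {ω : Fin n → ℝ} (hω : RationallyIndependent ω)
    {f : C(UnitAddTorus (Fin n), ℂ)} (hf : ∀ x t, f (x + linearFlow ω t) = f x)
    (x y : UnitAddTorus (Fin n)) : f x = f y := by
  refine eq_of_forall_dist_le fun ε hε => ?_
  have hf_mem :
      f ∈ (Submodule.span ℂ (Set.range (mFourier (d := Fin n)))).topologicalClosure := by
    rw [span_mFourier_closure_eq_top]
    trivial
  rw [← SetLike.mem_coe, Submodule.topologicalClosure_coe] at hf_mem
  obtain ⟨g, hg, hfg⟩ := Metric.mem_closure_iff.mp hf_mem (ε / 2) (half_pos hε)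
  obtain ⟨c, hc⟩ := exists_tendsto_flowAverage_of_mem_span hω hg
  have hlim : Tendsto (fun T => 2 * ‖f - g‖ + ‖flowAverage ω x T g - flowAverage ω y T g‖) atTop
      (𝓝 (2 * ‖f - g‖)) := by
    simpa using (((hc x).sub (hc y)).norm).const_add (2 * ‖f - g‖)
  have hxy : dist (f x) (f y) ≤ 2 * ‖f - g‖ := by
    refine ge_of_tendsto hlim ?_
    filter_upwards [eventually_gt_atTop 0] with T hT
    have hsplit : f x - f y = flowAverage ω x T (f - g) - flowAverage ω y T (f - g)
        + (flowAverage ω x T g - flowAverage ω y T g) := by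
      rw [map_sub, map_sub, flowAverage_of_invariant ω hf x hT.ne',
        flowAverage_of_invariant ω hf y hT.ne']
      ring
    rw [dist_eq_norm, hsplit, two_mul]
    grw [norm_add_le, norm_sub_le, norm_flowAverage_le ω x hT.le, norm_flowAverage_le ω y hT.le]
  rw [dist_eq_norm] at hfg
  linarith

end UnitAddTorus

open UnitAddTorus in
lemma Torus.eq_of_forall_add_torusVec_eq {n m : ℕ} {ω : Fin n → ℝ} (hω : RationallyIndependent ω)
    {F : Torus n → Torus m} (hF : Continuous F) (hinv : ∀ x t, F (x + torusVec ω t) = F x)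
    (x y : Torus n) : F x = F y := by
  let e := AddCircle.equivAddCircle 1 (2 * Real.pi) one_ne_zero Real.two_pi_pos.ne'
  let Φ : UnitAddTorus (Fin n) ≃ₜ Torus n := Homeomorph.piCongrRight fun _ =>
    AddCircle.homeomorphAddCircle 1 (2 * Real.pi) one_ne_zero Real.two_pi_pos.ne'
  have hΦ : ∀ z t, Φ (z + linearFlow ω t) = Φ z + torusVec ω (t * (2 * Real.pi)) := by
    intro z t
    funext i
    change e (z i + _) = e (z i) + _
    rw [map_add, linearFlow, AddCircle.equivAddCircle_apply_mk, torusVec]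
    congr 2
    ring
  funext i
  refine AddCircle.injective_toCircle Real.two_pi_pos.ne' (Subtype.val_injective ?_)
  let f : C(UnitAddTorus (Fin n), ℂ) :=
    ⟨fun z => AddCircle.toCircle (F (Φ z) i), by fun_prop⟩
  simpa [f] using eq_of_forall_add_linearFlow_eq hω (f := f)
    (fun z t => by simp only [f, ContinuousMap.coe_mk, hΦ, hinv]) (Φ.symm x) (Φ.symm y)

namespace AddCircle

variable {p : ℝ} [Fact (0 < p)]

lemma two_nsmul_eq_zero_iff {u : AddCircle p} : 2 • u = 0 ↔ u = 0 ∨ u = ↑(p / 2) := by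
  rw [AddCircle.nsmul_eq_zero_iff two_pos]
  constructor
  · rintro ⟨m, hm, rfl⟩
    interval_cases m
    · simp
    · right; congr 1; push_cast; ring
  · rintro (rfl | rfl)
    · exact ⟨0, two_pos, by simp⟩
    · exact ⟨1, one_lt_two, by push_cast; ring_nf⟩

lemma half_period_ne_zero : (↑(p / 2) : AddCircle p) ≠ 0 := by
  have := addOrderOf_period_div (p := p) two_pos
  intro h
  rw [Nat.cast_two, h, addOrderOf_zero] at this
  norm_num at this

lemma ncard_setOf_add_self_eq (a : AddCircle p) : {s | s + s = a}.ncard = 2 := by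
  obtain ⟨c, rfl⟩ : ∃ c, c + c = a :=
    ⟨DivisibleBy.div a (2 : ℤ), by rw [← two_zsmul, DivisibleBy.div_cancel a two_ne_zero]⟩
  have hset : {s | s + s = c + c} = {c, c + ↑(p / 2)} := by
    ext s
    rw [Set.mem_ofPred_eq, ← sub_eq_zero, show s + s - (c + c) = 2 • (s - c) by abel,
      two_nsmul_eq_zero_iff, sub_eq_zero, sub_eq_iff_eq_add']
    rfl
  rw [hset, Set.ncard_pair]
  simpa using half_period_ne_zero

end AddCircle

lemma ncard_setOf_add_self_eq_pi {ι : Type*} [Fintype ι] {p : ℝ} [Fact (0 < p)]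
    (a : ι → AddCircle p) : {x | x + x = a}.ncard = 2 ^ Fintype.card ι := by
  have hpi : {x | x + x = a} = Set.univ.pi fun i => {s | s + s = a i} := by
    ext x
    simp [funext_iff]
  rw [hpi, ← Nat.card_coe_set_eq, Nat.card_congr (Equiv.Set.univPi _), Nat.card_pi]
  simp [Nat.card_coe_set_eq, AddCircle.ncard_setOf_add_self_eq]

/-- a continuous map `G : 𝕋ⁿ → 𝕋ⁿ` reversing the quasi-periodic flow
`x ↦ x + tω` (with `ω` rationally independent), i.e. satisfying `G(x + tω) = G(x) - tω`,
must be of the form `G(x) = G(0) - x`.  In particular `G` is an involution, its fixed point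
set equals `{x : 2x = G 0}`, and that set is finite, consisting of exactly `2ⁿ` points. -/
theorem flow_reversing_map_on_torus
    (n : ℕ) (ω : Fin n → ℝ) (hω : RationallyIndependent ω)
    (G : Torus n → Torus n) (hGcont : Continuous G)
    (hGrev : ∀ (x : Torus n) (t : ℝ), G (x + torusVec ω t) = G x - torusVec ω t) :
    (∀ x : Torus n, G x = G 0 - x) ∧
    Function.Involutive G ∧
    {x : Torus n | G x = x} = {x : Torus n | x + x = G 0} ∧
    {x : Torus n | G x = x}.Finite ∧
    {x : Torus n | G x = x}.ncard = 2 ^ n := by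
  have hform : ∀ x, G x = G 0 - x := fun x =>
    eq_sub_of_add_eq <| by
      simpa using Torus.eq_of_forall_add_torusVec_eq hω (F := fun y => G y + y)
        (hGcont.add continuous_id) (fun y t => by rw [hGrev]; abel) x 0
  have hfix : {x : Torus n | G x = x} = {x | x + x = G 0} := by
    ext x
    rw [Set.mem_ofPred_eq, Set.mem_ofPred_eq, hform x, sub_eq_iff_eq_add, eq_comm]
  have hcard : {x : Torus n | G x = x}.ncard = 2 ^ n := by
    rw [hfix, ncard_setOf_add_self_eq_pi, Fintype.card_fin]
  refine ⟨hform, fun x => by rw [hform x, hform (G 0 - x), sub_sub_cancel], hfix,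
    Set.finite_of_ncard_ne_zero (by rw [hcard]; positivity), hcard⟩
end

section
/- Let K be a compact Hausdorff topological space, n ∈ ℤ₊, ω ∈ ℝⁿ rationally independent, F: 𝕋ⁿ → K a surjective continuous map, and 𝔊 a continuous action of ℝ on K with F(φ + ωt) = 𝔊^t(F(φ)) for all φ ∈ 𝕋ⁿ and t ∈ ℝ. Let J: K → K be a continuous involution that reverses the flow, i.e. J(𝔊^t(κ)) = 𝔊^{−t}(J(κ)) for all κ ∈ K and t ∈ ℝ. Then J has at least one fixed point in K; moreover, if J has at most one fixed point, then K consists of a single point κ₀, which satisfies 𝔊^t(κ₀) = κ₀ for all t ∈ ℝ and J(κ₀) = κ₀. -/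
open scoped BigOperators

/-!
Kronecker: a proper closed subgroup of `ℝⁿ` is mapped into `ℤ` by some nonzero linear functional,
so if the closure of `{tω} + 2πℤⁿ` were proper, the integers `f (2π eᵢ)` would be a relation among
the `ωᵢ`. Hence the line `t ↦ tω` is dense in `𝕋ⁿ`, so the fibres of `F` are translation invariant
and `J` lifts to the reflection `φ ↦ ψ - φ`, where `F ψ = J (F 0)`. For a half `φ₀` of `ψ`,
`F φ₀` is fixed by `J`. If it is the only fixed point, `F (φ₀ + 2χ) = F φ₀` makes `F (φ₀ + χ)`
fixed as well, so `F (φ₀ + ·)` is constant on the dyadic torsion of `𝕋ⁿ`, which is dense.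
-/

open Set Filter Topology

theorem tendsto_floor_div_mul_of_tendsto_zero {ι : Type*} {l : Filter ι} {r : ι → ℝ}
    (hr_pos : ∀ i, 0 < r i) (hr : Tendsto r l (𝓝 0)) (t : ℝ) :
    Tendsto (fun i => (⌊t / r i⌋ : ℝ) * r i) l (𝓝 t) := by
  have hfract : Tendsto (fun i => Int.fract (t / r i) * r i) l (𝓝 0) :=
    squeeze_zero (fun i => mul_nonneg (Int.fract_nonneg _) (hr_pos i).le)
      (fun i => mul_le_of_le_one_left (hr_pos i).le (Int.fract_lt_one _).le) hr
  convert (tendsto_const_nhds (x := t)).sub hfract using 2 with i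
  · rw [Int.fract, sub_mul, div_mul_cancel₀ _ (hr_pos i).ne']; ring
  · simp

theorem eq_zero_of_forall_mul_mem_intCast {a : ℝ} (h : ∀ t : ℝ, ∃ z : ℤ, t * a = z) : a = 0 := by
  by_contra ha
  obtain ⟨z, hz⟩ := h (a⁻¹ / 2)
  have : (2 * z : ℝ) = 1 := by rw [← hz]; field_simp
  have : 2 * z = 1 := by exact_mod_cast this
  omega

namespace AddSubgroup

variable {E : Type*}

section Lineality

variable [AddCommGroup E] [Module ℝ E]

def linealitySpace (V : AddSubgroup E) : Submodule ℝ E where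
  carrier := {x | ∀ t : ℝ, t • x ∈ V}
  add_mem' hx hy t := by simpa only [smul_add] using V.add_mem (hx t) (hy t)
  zero_mem' t := by simpa only [smul_zero] using V.zero_mem
  smul_mem' c x hx t := by simpa only [smul_smul] using hx (t * c)

theorem mem_of_mem_linealitySpace {V : AddSubgroup E} {x : E} (hx : x ∈ V.linealitySpace) :
    x ∈ V := by
  simpa using hx 1

end Lineality

variable [NormedAddCommGroup E] [NormedSpace ℝ E] [FiniteDimensional ℝ E]

theorem linealitySpace_ne_bot_of_tendsto_zero {V : AddSubgroup E} (hV : IsClosed (V : Set E))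
    {x : ℕ → E} (hxV : ∀ k, x k ∈ V) (hx_ne : ∀ k, x k ≠ 0) (hx : Tendsto x atTop (𝓝 0)) :
    V.linealitySpace ≠ ⊥ := by
  have hx_pos : ∀ k, 0 < ‖x k‖ := fun k => norm_pos_iff.mpr (hx_ne k)
  have hu : ∀ k, ‖x k‖⁻¹ • x k ∈ Metric.sphere (0 : E) 1 := fun k => by
    simp [norm_smul, (hx_pos k).ne']
  obtain ⟨v, hv, φ, hφ, hv_lim⟩ := (isCompact_sphere (0 : E) 1).tendsto_subseq hu
  refine (Submodule.ne_bot_iff _).mpr ⟨v, fun t => ?_, ne_zero_of_mem_unit_sphere ⟨v, hv⟩⟩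
  have hr := (tendsto_norm_zero.comp hx).comp hφ.tendsto_atTop
  have hlim := (tendsto_floor_div_mul_of_tendsto_zero (fun k => hx_pos (φ k)) hr t).smul hv_lim
  refine hV.mem_of_tendsto hlim (Eventually.of_forall fun k => ?_)
  simp only [Function.comp_apply, smul_smul, mul_assoc,
    mul_inv_cancel₀ (hx_pos (φ k)).ne', mul_one, Int.cast_smul_eq_zsmul]
  exact V.zsmul_mem (hxV (φ k)) _

theorem discreteTopology_of_linealitySpace_eq_bot {V : AddSubgroup E}
    (hV : IsClosed (V : Set E)) (h : V.linealitySpace = ⊥) : DiscreteTopology V := by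
  refine discreteTopology_of_isOpen_singleton_zero (Metric.isOpen_singleton_iff.mpr ?_)
  by_contra! hacc
  have : ∀ k : ℕ, ∃ y : V, dist y 0 < 1 / (k + 1) ∧ y ≠ 0 := fun k => hacc _ (by positivity)
  choose y hy_lt hy_ne using this
  refine linealitySpace_ne_bot_of_tendsto_zero hV (fun k => (y k).2)
    (fun k => by simpa using hy_ne k) ?_ h
  refine tendsto_iff_norm_sub_tendsto_zero.mpr (squeeze_zero (fun _ => norm_nonneg _)
    (fun k => ?_) tendsto_one_div_add_atTop_nhds_zero_nat)
  simpa [dist_eq_norm] using (hy_lt k).le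

theorem exists_dual_ne_zero_forall_mem_intCast_of_discreteTopology [Nontrivial E]
    (L : AddSubgroup E) [DiscreteTopology L] :
    ∃ f : Module.Dual ℝ E, f ≠ 0 ∧ ∀ x ∈ L, ∃ z : ℤ, f x = z := by
  by_cases hspan : Submodule.span ℝ (L : Set E) = ⊤
  · let L' := L.toIntSubmodule
    have : DiscreteTopology L' := ‹DiscreteTopology L›
    have : IsZLattice ℝ L' := ⟨hspan⟩
    let b := Module.Free.chooseBasis ℤ L'
    obtain ⟨i⟩ := (b.ofZLatticeBasis ℝ L').index_nonempty
    refine ⟨(b.ofZLatticeBasis ℝ L').coord i, fun h => ?_, fun x hx => ⟨b.repr ⟨x, hx⟩ i, ?_⟩⟩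
    · simpa using LinearMap.congr_fun h (b.ofZLatticeBasis ℝ L' i)
    · simpa using b.ofZLatticeBasis_repr_apply ℝ L' ⟨x, hx⟩ i
  · obtain ⟨f, hf, hle⟩ := (Submodule.span ℝ (L : Set E)).exists_le_ker_of_lt_top
      (lt_top_iff_ne_top.mpr hspan)
    exact ⟨f, hf, fun x hx => ⟨0, by simpa using hle (Submodule.subset_span hx)⟩⟩

theorem exists_dual_ne_zero_forall_mem_intCast_of_isClosed {V : AddSubgroup E}
    (hV : IsClosed (V : Set E)) (hV_ne : V ≠ ⊤) :
    ∃ f : Module.Dual ℝ E, f ≠ 0 ∧ ∀ x ∈ V, ∃ z : ℤ, f x = z := by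
  -- `V` is its lineality space plus the discrete group `V ∩ C`, `C` a complement of that space.
  obtain ⟨C, hWC⟩ := V.linealitySpace.exists_isCompl
  let p := C.projectionOnto V.linealitySpace hWC.symm
  have hp_mem : ∀ x ∈ V, (p x : E) ∈ V := fun x hx => by
    simpa [p] using V.sub_mem hx
      (mem_of_mem_linealitySpace (Submodule.sub_projection_mem hWC.symm x))
  let L : AddSubgroup C := V.comap C.subtype.toAddMonoidHom
  have hL_closed : IsClosed (L : Set C) := hV.preimage continuous_subtype_val
  have hL_lineality : L.linealitySpace = ⊥ := by
    refine (Submodule.eq_bot_iff _).mpr fun x hx => Subtype.ext ?_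
    exact (Submodule.disjoint_def.mp hWC.disjoint) _ (fun t => hx t) x.2
  have : DiscreteTopology L := discreteTopology_of_linealitySpace_eq_bot hL_closed hL_lineality
  have : Nontrivial C := by
    refine Submodule.nontrivial_iff_ne_bot.mpr fun hC => hV_ne ?_
    have hW : V.linealitySpace = ⊤ := by simpa [hC] using hWC.sup_eq_top
    exact eq_top_iff.mpr fun x _ => mem_of_mem_linealitySpace (hW ▸ Submodule.mem_top)
  obtain ⟨g, hg, hg_int⟩ := L.exists_dual_ne_zero_forall_mem_intCast_of_discreteTopology
  refine ⟨g ∘ₗ p, fun h => hg (LinearMap.ext fun c => ?_), fun x hx => hg_int _ (hp_mem x hx)⟩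
  obtain ⟨x, rfl⟩ := Submodule.projectionOnto_surjective hWC.symm c
  exact LinearMap.congr_fun h x

end AddSubgroup

noncomputable def torusCover (n : ℕ) : (Fin n → ℝ) →+ Torus n :=
  (QuotientAddGroup.mk' (AddSubgroup.zmultiples (2 * Real.pi))).compLeft (Fin n)

theorem continuous_torusCover (n : ℕ) : Continuous (torusCover n) :=
  continuous_pi fun i => (AddCircle.continuous_mk' _).comp (continuous_apply i)

theorem torusCover_surjective (n : ℕ) : Function.Surjective (torusCover n) :=
  QuotientAddGroup.mk_surjective.comp_left

theorem torusCover_two_pi_smul_single {n : ℕ} (i : Fin n) :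
    torusCover n ((2 * Real.pi) • Pi.single i 1) = 0 := by
  funext j
  by_cases h : j = i
  · subst h; simp [torusCover]
  · simp [torusCover, h]

noncomputable def torusLine {n : ℕ} (ω : Fin n → ℝ) : ℝ →+ Torus n :=
  (torusCover n).comp (LinearMap.toSpanSingleton ℝ _ ω).toAddMonoidHom

theorem coe_torusLine {n : ℕ} (ω : Fin n → ℝ) : ⇑(torusLine ω) = torusVec ω := rfl

theorem RationallyIndependent.denseRange_torusLine {n : ℕ} {ω : Fin n → ℝ}
    (hω : RationallyIndependent ω) : DenseRange (torusLine ω) := by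
  let V := (torusLine ω).range.topologicalClosure.comap (torusCover n)
  have hV_closed : IsClosed (V : Set (Fin n → ℝ)) :=
    (torusLine ω).range.isClosed_topologicalClosure.preimage (continuous_torusCover n)
  by_contra hnd
  have hV_ne : V ≠ ⊤ := fun hV => hnd fun y => by
    obtain ⟨x, rfl⟩ := torusCover_surjective n y
    exact (hV ▸ AddSubgroup.mem_top x : x ∈ V)
  obtain ⟨f, hf, hf_int⟩ := AddSubgroup.exists_dual_ne_zero_forall_mem_intCast_of_isClosed
    hV_closed hV_ne
  let e := Pi.basisFun ℝ (Fin n)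
  have hfω : f ω = 0 := eq_zero_of_forall_mul_mem_intCast fun t => by
    simpa using hf_int (t • ω) ((torusLine ω).range.le_topologicalClosure ⟨t, rfl⟩)
  choose k hk using fun i => hf_int ((2 * Real.pi) • e i)
    (by simp [V, e, torusCover_two_pi_smul_single])
  have hk_ne : k ≠ 0 := fun hk0 => hf <| e.ext fun i => by
    simpa [hk0, Real.pi_ne_zero] using hk i
  refine hω k hk_ne ?_
  calc ∑ i, (k i : ℝ) * ω i = 2 * Real.pi * ∑ i, ω i * f (e i) := by
        simp only [← hk, map_smul, smul_eq_mul, Finset.mul_sum]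
        exact Finset.sum_congr rfl fun i _ => by ring
    _ = 2 * Real.pi * f ω := by
        congr 1
        simpa [e, map_sum, mul_comm] using (congrArg f (e.sum_repr ω))
    _ = 0 := by rw [hfω, mul_zero]

theorem AddCircle.dense_primaryComponent {T : ℝ} [Fact (0 < T)] {q : ℕ} (hq : 1 < q) :
    Dense (AddCommGroup.primaryComponent (AddCircle T) q : Set (AddCircle T)) := by
  refine dense_addSubgroup_iff_ne_zmultiples.mpr fun a ha hH => ?_
  have hpos : 0 < q ^ addOrderOf a := pow_pos (by omega) _
  let b : AddCircle T := ((T / ↑(q ^ addOrderOf a) : ℝ) : AddCircle T)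
  have hb : addOrderOf b = q ^ addOrderOf a := AddCircle.addOrderOf_period_div hpos
  have hb_mem : b ∈ AddCommGroup.primaryComponent (AddCircle T) q :=
    ⟨addOrderOf a, hb ▸ addOrderOf_nsmul_eq_zero b⟩
  have hdvd := hb ▸ addOrderOf_dvd_of_mem_zmultiples (hH ▸ hb_mem)
  exact (Nat.le_of_dvd (Nat.pos_of_ne_zero ha) hdvd).not_gt (Nat.lt_pow_self hq)

theorem dense_primaryComponent_pi {ι : Type*} [Finite ι] {G : ι → Type*}
    [∀ i, AddCommGroup (G i)] [∀ i, TopologicalSpace (G i)] {q : ℕ}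
    (h : ∀ i, Dense (AddCommGroup.primaryComponent (G i) q : Set (G i))) :
    Dense (AddCommGroup.primaryComponent (∀ i, G i) q : Set (∀ i, G i)) := by
  have := Fintype.ofFinite ι
  refine (dense_pi Set.univ fun i _ => h i).mono fun χ hχ => ?_
  choose k hk using fun i => hχ i (Set.mem_univ i)
  refine ⟨∑ i, k i, funext fun i => ?_⟩
  obtain ⟨c, hc⟩ := pow_dvd_pow q (Finset.single_le_sum (fun j _ => Nat.zero_le (k j))
    (Finset.mem_univ i))
  simp [hc, mul_nsmul, hk i]

theorem Continuous.apply_eq_apply_zero_of_nsmul {G X : Type*} [AddCommGroup G]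
    [TopologicalSpace G] [TopologicalSpace X] [T2Space X] {q : ℕ}
    (hG : Dense (AddCommGroup.primaryComponent G q : Set G)) {f : G → X} (hf : Continuous f)
    (h_nsmul : ∀ χ, f (q • χ) = f 0 → f χ = f 0) (χ : G) : f χ = f 0 := by
  have h_torsion : ∀ (k : ℕ) (χ : G), q ^ k • χ = 0 → f χ = f 0 := by
    intro k
    induction k with
    | zero => intro χ hχ; rw [← hχ, pow_zero, one_smul]
    | succ k ih => exact fun χ hχ => h_nsmul χ (ih _ (by rwa [← mul_nsmul, ← pow_succ']))
  exact congrFun (hf.ext_on hG continuous_const fun χ ⟨k, hk⟩ => h_torsion k χ hk) χ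

section ReversingInvolution

variable {G K : Type*} [AddCommGroup G] [TopologicalSpace G] [IsTopologicalAddGroup G]
  [TopologicalSpace K] [T2Space K] {F : G → K} {v : ℝ →+ G} {𝔊 : ℝ → K → K}

theorem map_add_eq_map_add_of_map_eq (hF : Continuous F) (hv : DenseRange v)
    (hconj : ∀ φ t, F (φ + v t) = 𝔊 t (F φ)) {φ φ' : G} (h : F φ = F φ') (χ : G) :
    F (φ + χ) = F (φ' + χ) := by
  refine congrFun ((hF.comp (continuous_const_add φ)).ext_on hv
    (hF.comp (continuous_const_add φ')) ?_) χ
  rintro _ ⟨t, rfl⟩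
  simp only [Function.comp_apply, hconj, h]

theorem apply_map_eq_map_sub (hF : Continuous F) (hv : DenseRange v)
    (hconj : ∀ φ t, F (φ + v t) = 𝔊 t (F φ)) {J : K → K} (hJ : Continuous J)
    (hJrev : ∀ κ t, J (𝔊 t κ) = 𝔊 (-t) (J κ)) {ψ : G} (hψ : F ψ = J (F 0)) (φ : G) :
    J (F φ) = F (ψ - φ) := by
  refine congrFun ((hJ.comp hF).ext_on hv (hF.comp (continuous_const.sub continuous_id)) ?_) φ
  rintro _ ⟨t, rfl⟩
  calc J (F (v t)) = J (𝔊 t (F 0)) := by rw [← hconj, zero_add]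
    _ = F (ψ + v (-t)) := by rw [hJrev, ← hψ, hconj]
    _ = F (ψ - v t) := by rw [map_neg, sub_eq_add_neg]

end ReversingInvolution

theorem reversing_involution_on_factor_has_fixed_point_general
    (n : ℕ) (ω : Fin n → ℝ) (hω : RationallyIndependent ω)
    (K : Type*) [TopologicalSpace K] [T2Space K]
    (F : Torus n → K) (hFcont : Continuous F) (hFsurj : Function.Surjective F)
    (𝔊 : ℝ → K → K)
    (hconj : ∀ (φ : Torus n) (t : ℝ), F (φ + torusVec ω t) = 𝔊 t (F φ))
    (J : K → K) (hJcont : Continuous J)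
    (hJrev : ∀ (κ : K) (t : ℝ), J (𝔊 t κ) = 𝔊 (-t) (J κ)) :
    (∃ κ : K, J κ = κ) ∧
    ({κ : K | J κ = κ}.Subsingleton →
      ∃ κ₀ : K, (∀ κ : K, κ = κ₀) ∧ (∀ t : ℝ, 𝔊 t κ₀ = κ₀) ∧ J κ₀ = κ₀) := by
  have : Fact (0 < 2 * Real.pi) := ⟨Real.two_pi_pos⟩
  rw [← coe_torusLine] at hconj
  have hdense := hω.denseRange_torusLine
  obtain ⟨ψ, hψ⟩ := hFsurj (J (F 0))
  have hJF := apply_map_eq_map_sub hFcont hdense hconj hJcont hJrev hψ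
  set φ₀ := DivisibleBy.div ψ (2 : ℤ)
  have hφ₀ : ψ = φ₀ + φ₀ := by rw [← two_zsmul, DivisibleBy.div_cancel ψ two_ne_zero]
  have hfix : J (F φ₀) = F φ₀ := by rw [hJF, hφ₀, add_sub_cancel_right]
  refine ⟨⟨F φ₀, hfix⟩, fun hsub => ?_⟩
  have hhalf : ∀ χ, F (φ₀ + 2 • χ) = F (φ₀ + 0) → F (φ₀ + χ) = F (φ₀ + 0) := by
    intro χ h
    have hsym : F (φ₀ + χ) = F (φ₀ - χ) := by
      convert map_add_eq_map_add_of_map_eq hFcont hdense hconj h (-χ) using 2 <;> abel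
    rw [add_zero]
    refine hsub (?_ : J _ = _) hfix
    rw [hJF, hsym, hφ₀]
    congr 1
    abel
  have hconst := (hFcont.comp (continuous_const_add φ₀)).apply_eq_apply_zero_of_nsmul
    (dense_primaryComponent_pi fun _ => AddCircle.dense_primaryComponent one_lt_two) hhalf
  simp only [Function.comp_apply, add_zero] at hconst
  refine ⟨F φ₀, fun κ => ?_, fun t => ?_, hfix⟩
  · obtain ⟨φ, rfl⟩ := hFsurj κ
    simpa using hconst (φ - φ₀)
  · rw [← hconj]
    exact hconst _

/-- let `K` be a compact Hausdorff factor (via `F : 𝕋ⁿ → K`) of a quasi-periodic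
flow, carrying the induced continuous flow `𝔊`, and let `J : K → K` be a continuous involution
reversing the flow (`J ∘ 𝔊^t = 𝔊^{-t} ∘ J`).  Then `J` has at least one fixed point; moreover,
if `J` has at most one fixed point, then `K` is a single point `κ₀`, fixed by the flow and
by `J`. -/
theorem reversing_involution_on_factor_has_fixed_point
    (n : ℕ) (ω : Fin n → ℝ) (hω : RationallyIndependent ω)
    (K : Type*) [TopologicalSpace K] [CompactSpace K] [T2Space K]
    (F : Torus n → K) (hFcont : Continuous F) (hFsurj : Function.Surjective F)
    (𝔊 : ℝ → K → K)
    (h𝔊cont : Continuous fun q : ℝ × K => 𝔊 q.1 q.2)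
    (h𝔊zero : ∀ κ : K, 𝔊 0 κ = κ)
    (h𝔊add : ∀ t s : ℝ, ∀ κ : K, 𝔊 (t + s) κ = 𝔊 t (𝔊 s κ))
    (hconj : ∀ (φ : Torus n) (t : ℝ), F (φ + torusVec ω t) = 𝔊 t (F φ))
    (J : K → K) (hJcont : Continuous J) (hJinv : Function.Involutive J)
    (hJrev : ∀ (κ : K) (t : ℝ), J (𝔊 t κ) = 𝔊 (-t) (J κ)) :
    (∃ κ : K, J κ = κ) ∧
    ({κ : K | J κ = κ}.Subsingleton →
      ∃ κ₀ : K, (∀ κ : K, κ = κ₀) ∧ (∀ t : ℝ, 𝔊 t κ₀ = κ₀) ∧ J κ₀ = κ₀) :=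
  reversing_involution_on_factor_has_fixed_point_general n ω hω K F hFcont hFsurj 𝔊 hconj J hJcont
    hJrev
end

section
/- Let s ∈ ℕ, n ∈ ℤ₊, ν ∈ ℤ₊, Q ∈ ℕ, L ∈ ℕ, let 𝔄 ⊆ ℝ^s be open, and let Ω: 𝔄 → ℝⁿ and β: 𝔄 → ℝ^ν be C^Q-smooth mappings. If the pair of mappings (Ω, β) is affinely (Q,L)-nondegenerate at a point μ ∈ 𝔄, then it is affinely (Q,L)-nondegenerate at every point μ' ∈ 𝔄 sufficiently close to μ; in other words, the set of points of 𝔄 at which the pair (Ω, β) is affinely (Q,L)-nondegenerate is open. -/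
open scoped BigOperators

/-- The directional derivative of order `J` of `H` at `μ` in the direction `u`:
`d^J/dt^J H(μ + t u) |_{t=0}`.  By Taylor's formula this equals
`J! Σ_{|q|=J} D^q H(μ) u^q / q!`. -/
noncomputable def dirDeriv (s : ℕ) (J : ℕ) (H : (Fin s → ℝ) → ℝ) (μ u : Fin s → ℝ) : ℝ :=
  iteratedDeriv J (fun t : ℝ => H (μ + t • u)) 0

/-- The quantity `ρ^Q(μ)` of Definition 2.2 of the paper:
`min_{‖e‖=1} max_{1≤J≤Q} max_{‖u‖=1} |⟨d^J/dt^J Ω(μ+tu)|_{t=0}, e⟩|`. -/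
noncomputable def rhoQ {s n : ℕ} (Q : ℕ) (Ω : (Fin s → ℝ) → Fin n → ℝ) (μ : Fin s → ℝ) : ℝ :=
  sInf { r : ℝ | ∃ e : Fin n → ℝ, (∑ i, e i ^ 2) = 1 ∧
    r = sSup { v : ℝ | ∃ J : ℕ, 1 ≤ J ∧ J ≤ Q ∧ ∃ u : Fin s → ℝ, (∑ l, u l ^ 2) = 1 ∧
      v = |∑ i, e i * dirDeriv s J (fun μ' => Ω μ' i) μ u| } }

/-- The quantity `κ_ℓ^Q(μ)` of Definition 2.2 of the paper:
`max_{1≤J≤Q} max_{‖u‖=1} |⟨d^J/dt^J β(μ+tu)|_{t=0}, ℓ⟩|`. -/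
noncomputable def kappaQ {s ν : ℕ} (Q : ℕ) (β : (Fin s → ℝ) → Fin ν → ℝ)
    (ℓ : Fin ν → ℤ) (μ : Fin s → ℝ) : ℝ :=
  sSup { v : ℝ | ∃ J : ℕ, 1 ≤ J ∧ J ≤ Q ∧ ∃ u : Fin s → ℝ, (∑ l, u l ^ 2) = 1 ∧
      v = |∑ j, (ℓ j : ℝ) * dirDeriv s J (fun μ' => β μ' j) μ u| }

/-- The pair of mappings `(Ω, β)` is affinely `(Q,L)`-nondegenerate at the point `μ`
(Definition 2.2 of the paper).  The condition
`max_{1≤|q|≤Q} |⟨D^qΩ(μ),k⟩+⟨D^qβ(μ),ℓ⟩| > 0` is expressed (equivalently, for `C^Q` maps) by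
the existence of a nonvanishing directional derivative of some order `1 ≤ J ≤ Q` of the scalar
function `μ' ↦ ⟨Ω(μ'),k⟩+⟨β(μ'),ℓ⟩`. -/
def AffNondegAt {s n ν : ℕ} (Q L : ℕ) (Ω : (Fin s → ℝ) → Fin n → ℝ)
    (β : (Fin s → ℝ) → Fin ν → ℝ) (μ : Fin s → ℝ) : Prop :=
  (0 < n ∧ 0 < ν ∧ 0 < rhoQ Q Ω μ ∧
    ∀ k : Fin n → ℤ, ∀ ℓ : Fin ν → ℤ,
      1 ≤ (∑ j, |ℓ j|) → (∑ j, |ℓ j|) ≤ (L : ℤ) →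
      Real.sqrt (∑ i, ((k i : ℝ)) ^ 2) ≤ kappaQ Q β ℓ μ / rhoQ Q Ω μ →
      ∃ J : ℕ, 1 ≤ J ∧ J ≤ Q ∧ ∃ u : Fin s → ℝ,
        dirDeriv s J
          (fun μ' => (∑ i, (k i : ℝ) * Ω μ' i) + ∑ j, (ℓ j : ℝ) * β μ' j) μ u ≠ 0)
  ∨ (0 < n ∧ ν = 0 ∧ 0 < rhoQ Q Ω μ)
  ∨ (n = 0 ∧ 0 < ν ∧ ∀ ℓ : Fin ν → ℤ,
      1 ≤ (∑ j, |ℓ j|) → (∑ j, |ℓ j|) ≤ (L : ℤ) → 0 < kappaQ Q β ℓ μ)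
  ∨ (n = 0 ∧ ν = 0)

/-!
Writing the `J`-th derivative along `u` as `D^J F(μ)(u, …, u)`, the pairing
`⟨d^J/dt^J H(μ + t u), c⟩` is jointly continuous in `(μ, c, u)` for `μ ∈ 𝔄`. A maximum or minimum
of a continuous function over a compact set (finitely many orders `J`, the unit sphere in `u`,
the unit sphere in `e`) depends continuously on the parameters, so `ρ^Q` and every `κ_ℓ^Q` are
continuous on `𝔄`, and the positivity conditions are open.

For condition (1): if `‖k‖ ρ^Q(μ) > κ_ℓ^Q(μ)`, then along `e = k/‖k‖` some derivative of `⟨Ω, k⟩`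
exceeds `κ_ℓ^Q(μ)` in absolute value, which bounds the corresponding derivative of `⟨β, ℓ⟩`, so
the sum cannot vanish. Hence the condition holds at `μ` for all `k`. Near `μ` we have
`ρ^Q > ρ^Q(μ)/2` and `κ_ℓ^Q < κ_ℓ^Q(μ) + 1`, so only finitely many pairs `(k, ℓ)` are ever tested,
and for each of them a nonzero derivative at `μ` stays nonzero nearby.
-/

open Set Filter Topology

theorem IsCompact.continuousOn_sSup_image {α X Y : Type*} [ConditionallyCompleteLinearOrder α]
    [TopologicalSpace α] [OrderTopology α] [TopologicalSpace X] [TopologicalSpace Y]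
    {f : X → Y → α} {A : Set X} {K : Set Y} (hK : IsCompact K) (hf : ContinuousOn ↿f (A ×ˢ K)) :
    ContinuousOn (fun x => sSup (f x '' K)) A := by
  have : CompactSpace K := isCompact_iff_compactSpace.mp hK
  rw [continuousOn_iff_continuous_domRestrict]
  have hc : Continuous fun p : A × K => f p.1 p.2 :=
    hf.comp_continuous (f := fun p : A × K => ((p.1 : X), (p.2 : Y))) (by fun_prop)
      fun p => ⟨p.1.2, p.2.2⟩
  convert isCompact_univ.continuous_sSup (f := fun (x : A) (y : K) => f x y) hc using 2 with x
  change sSup (f x '' K) = sSup ((fun y : K => f x y) '' univ)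
  rw [image_univ, image_eq_range]

theorem IsCompact.continuousOn_sInf_image {α X Y : Type*} [ConditionallyCompleteLinearOrder α]
    [TopologicalSpace α] [OrderTopology α] [TopologicalSpace X] [TopologicalSpace Y]
    {f : X → Y → α} {A : Set X} {K : Set Y} (hK : IsCompact K) (hf : ContinuousOn ↿f (A ×ˢ K)) :
    ContinuousOn (fun x => sInf (f x '' K)) A :=
  hK.continuousOn_sSup_image (α := αᵒᵈ) hf

theorem iteratedDeriv_comp_add_smul {𝕜 E F : Type*} [NontriviallyNormedField 𝕜]
    [NormedAddCommGroup E] [NormedSpace 𝕜 E] [NormedAddCommGroup F] [NormedSpace 𝕜 F]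
    {n : ℕ} {f : E → F} {x : E} (hf : ContDiffAt 𝕜 n f x) (v : E) :
    iteratedDeriv n (fun t : 𝕜 => f (x + t • v)) 0 = iteratedFDeriv 𝕜 n f x (fun _ => v) := by
  induction n generalizing f with
  | zero => simp
  | succ n ih =>
    have hf' : ContDiffAt 𝕜 n (fderiv 𝕜 f) x := hf.fderiv_right (by norm_cast)
    have hline : Tendsto (fun t : 𝕜 => x + t • v) (𝓝 0) (𝓝 x) := by
      have : Continuous fun t : 𝕜 => x + t • v := by fun_prop
      simpa using this.tendsto 0
    have hderiv : deriv (fun t : 𝕜 => f (x + t • v)) =ᶠ[𝓝 0]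
        fun t => fderiv 𝕜 f (x + t • v) v := by
      filter_upwards [hline.eventually (hf.eventually (by simp))] with t ht
      have hd : DifferentiableAt 𝕜 f (x + t • v) := ht.differentiableAt (by simp)
      simpa [Function.comp_def] using (hd.hasFDerivAt.comp_hasDerivAt t
        (((hasDerivAt_id t).smul_const v).const_add x)).deriv
    rw [iteratedDeriv_succ', hderiv.iteratedDeriv_eq, ih (hf'.clm_apply contDiffAt_const),
      iteratedFDeriv_succ_apply_right]
    exact congr($((ContinuousLinearMap.apply 𝕜 F v).iteratedFDeriv_comp_left hf' le_rfl) _)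

section DirectionalDerivatives

variable {s : ℕ} {U : Set (Fin s → ℝ)}

theorem dirDeriv_eq_iteratedFDeriv {J : ℕ} {F : (Fin s → ℝ) → ℝ} {μ : Fin s → ℝ}
    (hF : ContDiffAt ℝ J F μ) (u : Fin s → ℝ) :
    dirDeriv s J F μ u = iteratedFDeriv ℝ J F μ (fun _ => u) :=
  iteratedDeriv_comp_add_smul hF u

theorem continuousOn_dirDeriv {J : ℕ} {F : (Fin s → ℝ) → ℝ} (hU : IsOpen U)
    (hF : ContDiffOn ℝ J F U) :
    ContinuousOn (fun p : (Fin s → ℝ) × (Fin s → ℝ) => dirDeriv s J F p.1 p.2) (U ×ˢ univ) := by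
  have hcont : ContinuousOn (iteratedFDeriv ℝ J F) U :=
    (hF.continuousOn_iteratedFDerivWithin le_rfl hU.uniqueDiffOn).congr
      fun μ hμ => (iteratedFDerivWithin_of_isOpen J hU hμ).symm
  refine ContinuousOn.congr ?_ fun p hp =>
    dirDeriv_eq_iteratedFDeriv (hF.contDiffAt (hU.mem_nhds hp.1)) p.2
  exact continuous_eval.comp_continuousOn
    ((hcont.comp continuousOn_fst fun p hp => hp.1).prodMk (by fun_prop))

theorem dirDeriv_add {J : ℕ} {F G : (Fin s → ℝ) → ℝ} {μ : Fin s → ℝ}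
    (hF : ContDiffAt ℝ J F μ) (hG : ContDiffAt ℝ J G μ) (u : Fin s → ℝ) :
    dirDeriv s J (fun x => F x + G x) μ u = dirDeriv s J F μ u + dirDeriv s J G μ u := by
  rw [dirDeriv_eq_iteratedFDeriv (hF.add hG), dirDeriv_eq_iteratedFDeriv hF,
    dirDeriv_eq_iteratedFDeriv hG, fun_iteratedFDeriv_add_apply hF hG]
  rfl

theorem dirDeriv_sum_mul {ι : Type*} [Fintype ι] {J : ℕ} {F : ι → (Fin s → ℝ) → ℝ}
    {μ : Fin s → ℝ} (hF : ∀ i, ContDiffAt ℝ J (F i) μ) (c : ι → ℝ) (u : Fin s → ℝ) :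
    dirDeriv s J (fun x => ∑ i, c i * F i x) μ u = ∑ i, c i * dirDeriv s J (F i) μ u := by
  have hcF : ∀ i, ContDiffAt ℝ J (fun x => c i * F i x) μ := fun i => contDiffAt_const.mul (hF i)
  rw [dirDeriv_eq_iteratedFDeriv (ContDiffAt.sum fun i _ => hcF i),
    iteratedFDeriv_fun_sum_apply fun i _ => hcF i]
  simp only [sum_apply]
  refine Finset.sum_congr rfl fun i _ => ?_
  rw [dirDeriv_eq_iteratedFDeriv (hF i), ← smul_eq_mul, ← smul_apply,
    ← iteratedFDeriv_const_smul_apply' (hF i)]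
  rfl

def HasNonzeroDirDeriv (Q : ℕ) (F : (Fin s → ℝ) → ℝ) (μ : Fin s → ℝ) : Prop :=
  ∃ J : ℕ, 1 ≤ J ∧ J ≤ Q ∧ ∃ u : Fin s → ℝ, dirDeriv s J F μ u ≠ 0

theorem HasNonzeroDirDeriv.eventually {Q : ℕ} {F : (Fin s → ℝ) → ℝ} {μ : Fin s → ℝ}
    (hU : IsOpen U) (hF : ContDiffOn ℝ Q F U) (hμ : μ ∈ U) (h : HasNonzeroDirDeriv Q F μ) :
    ∀ᶠ μ' in 𝓝 μ, HasNonzeroDirDeriv Q F μ' := by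
  obtain ⟨J, hJ1, hJQ, u, hne⟩ := h
  have hcont : ContinuousAt (fun μ' => dirDeriv s J F μ' u) μ :=
    ((continuousOn_dirDeriv hU (hF.of_le (by exact_mod_cast hJQ))).comp
      (continuousOn_id.prodMk continuousOn_const) fun _ h => ⟨h, mem_univ _⟩).continuousAt
      (hU.mem_nhds hμ)
  exact (hcont.eventually_ne hne).mono fun μ' h => ⟨J, hJ1, hJQ, u, h⟩

end DirectionalDerivatives

section DerivSup

variable {s m : ℕ} {U : Set (Fin s → ℝ)} {Q : ℕ} {H : (Fin s → ℝ) → Fin m → ℝ}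

def euclUnitSphere (m : ℕ) : Set (Fin m → ℝ) := {u | ∑ l, u l ^ 2 = 1}

theorem isCompact_euclUnitSphere (m : ℕ) : IsCompact (euclUnitSphere m) := by
  refine Metric.isCompact_of_isClosed_isBounded (isClosed_eq (by fun_prop) continuous_const)
    ((Metric.isBounded_closedBall (x := 0) (r := 1)).subset fun u hu => ?_)
  rw [mem_closedBall_zero_iff, pi_norm_le_iff_of_nonneg zero_le_one]
  intro l
  rw [Real.norm_eq_abs, ← sq_le_one_iff_abs_le_one, ← (hu : ∑ l, u l ^ 2 = 1)]
  exact Finset.single_le_sum (fun j _ => sq_nonneg (u j)) (Finset.mem_univ l)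

noncomputable def dirDerivDot (J : ℕ) (H : (Fin s → ℝ) → Fin m → ℝ) (c : Fin m → ℝ)
    (μ u : Fin s → ℝ) : ℝ :=
  ∑ i, c i * dirDeriv s J (fun μ' => H μ' i) μ u

theorem dirDerivDot_smul (J : ℕ) (H : (Fin s → ℝ) → Fin m → ℝ) (t : ℝ) (c : Fin m → ℝ)
    (μ u : Fin s → ℝ) : dirDerivDot J H (t • c) μ u = t * dirDerivDot J H c μ u := by
  simp only [dirDerivDot, Pi.smul_apply, smul_eq_mul, Finset.mul_sum, mul_assoc]

noncomputable def derivSup (Q : ℕ) (H : (Fin s → ℝ) → Fin m → ℝ) (c : Fin m → ℝ)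
    (μ : Fin s → ℝ) : ℝ :=
  sSup {v | ∃ J : ℕ, 1 ≤ J ∧ J ≤ Q ∧ ∃ u : Fin s → ℝ, (∑ l, u l ^ 2) = 1 ∧
    v = |dirDerivDot J H c μ u|}

theorem derivSup_eq_sSup_image (c : Fin m → ℝ) (μ : Fin s → ℝ) :
    derivSup Q H c μ = sSup ((fun p : ℕ × (Fin s → ℝ) => |dirDerivDot p.1 H c μ p.2|) ''
      (Icc 1 Q ×ˢ euclUnitSphere s)) := by
  unfold derivSup
  congr 1
  ext v
  simp only [mem_ofPred_eq, mem_image, mem_prod, mem_Icc, Prod.exists, euclUnitSphere]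
  constructor
  · rintro ⟨J, hJ1, hJQ, u, hu, rfl⟩
    exact ⟨J, u, ⟨⟨hJ1, hJQ⟩, hu⟩, rfl⟩
  · rintro ⟨J, u, ⟨⟨hJ1, hJQ⟩, hu⟩, rfl⟩
    exact ⟨J, hJ1, hJQ, u, hu, rfl⟩

theorem continuousOn_dirDerivDot (hU : IsOpen U) (hH : ContDiffOn ℝ Q H U) {J : ℕ}
    (hJ : J ≤ Q) :
    ContinuousOn (fun p : ((Fin s → ℝ) × (Fin m → ℝ)) × (Fin s → ℝ) =>
      dirDerivDot J H p.1.2 p.1.1 p.2) ((U ×ˢ univ) ×ˢ univ) := by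
  refine continuousOn_finsetSum _ fun i _ => ContinuousOn.mul (by fun_prop) ?_
  exact (continuousOn_dirDeriv hU ((contDiffOn_pi.1 hH i).of_le (by exact_mod_cast hJ))).comp
    (f := fun p : ((Fin s → ℝ) × (Fin m → ℝ)) × (Fin s → ℝ) => (p.1.1, p.2)) (by fun_prop)
    fun p hp => ⟨hp.1.1, mem_univ _⟩

theorem continuousOn_abs_dirDerivDot (hU : IsOpen U) (hH : ContDiffOn ℝ Q H U) :
    ContinuousOn (fun q : ((Fin s → ℝ) × (Fin m → ℝ)) × (ℕ × (Fin s → ℝ)) =>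
      |dirDerivDot q.2.1 H q.1.2 q.1.1 q.2.2|) ((U ×ˢ univ) ×ˢ (Icc 1 Q ×ˢ univ)) := by
  rintro ⟨p, J, u⟩ ⟨hp, hJ, -⟩
  have hfixed : ContinuousOn (fun q : ((Fin s → ℝ) × (Fin m → ℝ)) × (ℕ × (Fin s → ℝ)) =>
      |dirDerivDot J H q.1.2 q.1.1 q.2.2|) ((U ×ˢ univ) ×ˢ (Icc 1 Q ×ˢ univ)) :=
    (continuousOn_dirDerivDot hU hH hJ.2).abs.comp
      (f := fun q : ((Fin s → ℝ) × (Fin m → ℝ)) × (ℕ × (Fin s → ℝ)) => (q.1, q.2.2))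
      (continuous_fst.prodMk (continuous_snd.comp continuous_snd)).continuousOn
      fun q hq => ⟨hq.1, mem_univ _⟩
  refine (hfixed _ ⟨hp, hJ, mem_univ _⟩).congr_of_eventuallyEq ?_ rfl
  have hJnhds : ∀ᶠ q in 𝓝 (p, J, u), q.2.1 = J :=
    continuousAt_snd.fst.eventually_mem ((isOpen_discrete {J}).mem_nhds (mem_singleton J))
  filter_upwards [nhdsWithin_le_nhds hJnhds] with q hq
  simp only [hq]

theorem continuousOn_derivSup (hU : IsOpen U) (hH : ContDiffOn ℝ Q H U) :
    ContinuousOn (fun p : (Fin s → ℝ) × (Fin m → ℝ) => derivSup Q H p.2 p.1) (U ×ˢ univ) := by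
  simp only [derivSup_eq_sSup_image]
  exact ((finite_Icc 1 Q).isCompact.prod (isCompact_euclUnitSphere s)).continuousOn_sSup_image
    (f := fun (p : (Fin s → ℝ) × (Fin m → ℝ)) (q : ℕ × (Fin s → ℝ)) =>
      |dirDerivDot q.1 H p.2 p.1 q.2|)
    ((continuousOn_abs_dirDerivDot hU hH).mono (prod_mono_right (prod_mono_right (subset_univ _))))

theorem le_derivSup (hU : IsOpen U) (hH : ContDiffOn ℝ Q H U) {μ : Fin s → ℝ} (hμ : μ ∈ U)
    (c : Fin m → ℝ) {J : ℕ} (hJ1 : 1 ≤ J) (hJQ : J ≤ Q) {u : Fin s → ℝ}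
    (hu : u ∈ euclUnitSphere s) : |dirDerivDot J H c μ u| ≤ derivSup Q H c μ := by
  have hK := (finite_Icc 1 Q).isCompact.prod (isCompact_euclUnitSphere s)
  have hcont : ContinuousOn (fun q : ℕ × (Fin s → ℝ) => |dirDerivDot q.1 H c μ q.2|)
      (Icc 1 Q ×ˢ euclUnitSphere s) :=
    (continuousOn_abs_dirDerivDot hU hH).comp
      (f := fun q : ℕ × (Fin s → ℝ) => ((μ, c), q)) (by fun_prop)
      fun q hq => ⟨⟨hμ, mem_univ _⟩, hq.1, mem_univ _⟩
  rw [derivSup_eq_sSup_image]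
  exact le_csSup (hK.bddAbove_image hcont) ⟨(J, u), ⟨⟨hJ1, hJQ⟩, hu⟩, rfl⟩

theorem derivSup_nonneg (c : Fin m → ℝ) (μ : Fin s → ℝ) : 0 ≤ derivSup Q H c μ :=
  Real.sSup_nonneg fun _ ⟨_, _, _, _, _, hv⟩ => hv ▸ abs_nonneg _

theorem exists_lt_abs_dirDerivDot {c : Fin m → ℝ} {μ : Fin s → ℝ} {a : ℝ} (ha : 0 ≤ a)
    (h : a < derivSup Q H c μ) :
    ∃ J, 1 ≤ J ∧ J ≤ Q ∧ ∃ u ∈ euclUnitSphere s, a < |dirDerivDot J H c μ u| := by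
  unfold derivSup at h
  rcases eq_empty_or_nonempty {v | ∃ J : ℕ, 1 ≤ J ∧ J ≤ Q ∧ ∃ u : Fin s → ℝ,
      (∑ l, u l ^ 2) = 1 ∧ v = |dirDerivDot J H c μ u|} with hempty | hne
  · rw [hempty, Real.sSup_empty] at h
    exact absurd ha (not_le.2 h)
  obtain ⟨_, ⟨J, hJ1, hJQ, u, hu, rfl⟩, hlt⟩ := exists_lt_of_lt_csSup hne h
  exact ⟨J, hJ1, hJQ, u, hu, hlt⟩

end DerivSup

section RhoKappa

variable {s n ν : ℕ} {U : Set (Fin s → ℝ)} {Q : ℕ} {Ω : (Fin s → ℝ) → Fin n → ℝ}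
  {β : (Fin s → ℝ) → Fin ν → ℝ}

theorem rhoQ_eq_sInf_image (μ : Fin s → ℝ) :
    rhoQ Q Ω μ = sInf ((fun e => derivSup Q Ω e μ) '' euclUnitSphere n) := by
  unfold rhoQ
  congr 1
  ext r
  simp only [mem_ofPred_eq, mem_image, euclUnitSphere, eq_comm (a := r)]
  rfl

theorem continuousOn_rhoQ (hU : IsOpen U) (hΩ : ContDiffOn ℝ Q Ω U) :
    ContinuousOn (rhoQ Q Ω) U := by
  simp only [funext rhoQ_eq_sInf_image]
  exact (isCompact_euclUnitSphere n).continuousOn_sInf_image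
    (f := fun μ e => derivSup Q Ω e μ)
    ((continuousOn_derivSup hU hΩ).mono (prod_mono_right (subset_univ _)))

theorem rhoQ_le_derivSup (μ : Fin s → ℝ) {e : Fin n → ℝ} (he : e ∈ euclUnitSphere n) :
    rhoQ Q Ω μ ≤ derivSup Q Ω e μ := by
  rw [rhoQ_eq_sInf_image]
  exact csInf_le ⟨0, fun _ ⟨_, _, hr⟩ => hr ▸ derivSup_nonneg _ _⟩ ⟨e, he, rfl⟩

theorem kappaQ_nonneg (ℓ : Fin ν → ℤ) (μ : Fin s → ℝ) : 0 ≤ kappaQ Q β ℓ μ :=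
  derivSup_nonneg _ _

theorem continuousOn_kappaQ (hU : IsOpen U) (hβ : ContDiffOn ℝ Q β U) (ℓ : Fin ν → ℤ) :
    ContinuousOn (kappaQ Q β ℓ) U :=
  (continuousOn_derivSup hU hβ).comp (f := fun μ => (μ, fun j => (ℓ j : ℝ))) (by fun_prop)
    fun _ hμ => ⟨hμ, mem_univ _⟩

noncomputable def pairComb (a : Fin n → ℝ) (b : Fin ν → ℝ) (Ω : (Fin s → ℝ) → Fin n → ℝ)
    (β : (Fin s → ℝ) → Fin ν → ℝ) (μ : Fin s → ℝ) : ℝ :=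
  (∑ i, a i * Ω μ i) + ∑ j, b j * β μ j

theorem contDiffOn_pairComb (hΩ : ContDiffOn ℝ Q Ω U) (hβ : ContDiffOn ℝ Q β U)
    (a : Fin n → ℝ) (b : Fin ν → ℝ) : ContDiffOn ℝ Q (pairComb a b Ω β) U :=
  (ContDiffOn.sum fun i _ => contDiffOn_const.mul (contDiffOn_pi.1 hΩ i)).add
    (ContDiffOn.sum fun j _ => contDiffOn_const.mul (contDiffOn_pi.1 hβ j))

theorem dirDeriv_pairComb (hU : IsOpen U) (hΩ : ContDiffOn ℝ Q Ω U) (hβ : ContDiffOn ℝ Q β U)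
    {μ : Fin s → ℝ} (hμ : μ ∈ U) {J : ℕ} (hJ : J ≤ Q) (a : Fin n → ℝ) (b : Fin ν → ℝ)
    (u : Fin s → ℝ) :
    dirDeriv s J (pairComb a b Ω β) μ u = dirDerivDot J Ω a μ u + dirDerivDot J β b μ u := by
  have hJ' : (J : WithTop ℕ∞) ≤ Q := by exact_mod_cast hJ
  have hΩi : ∀ i, ContDiffAt ℝ J (fun x => Ω x i) μ := fun i =>
    ((contDiffOn_pi.1 hΩ i).contDiffAt (hU.mem_nhds hμ)).of_le hJ'
  have hβj : ∀ j, ContDiffAt ℝ J (fun x => β x j) μ := fun j =>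
    ((contDiffOn_pi.1 hβ j).contDiffAt (hU.mem_nhds hμ)).of_le hJ'
  unfold pairComb
  rw [dirDeriv_add (ContDiffAt.sum fun i _ => contDiffAt_const.mul (hΩi i))
    (ContDiffAt.sum fun j _ => contDiffAt_const.mul (hβj j)), dirDeriv_sum_mul hΩi,
    dirDeriv_sum_mul hβj]
  rfl

theorem hasNonzeroDirDeriv_pairComb_of_lt (hU : IsOpen U) (hΩ : ContDiffOn ℝ Q Ω U)
    (hβ : ContDiffOn ℝ Q β U) {μ : Fin s → ℝ} (hμ : μ ∈ U) {a : Fin n → ℝ} {ℓ : Fin ν → ℤ}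
    (h : kappaQ Q β ℓ μ < √(∑ i, a i ^ 2) * rhoQ Q Ω μ) :
    HasNonzeroDirDeriv Q (pairComb a (fun j => (ℓ j : ℝ)) Ω β) μ := by
  set r := √(∑ i, a i ^ 2)
  have hκ := kappaQ_nonneg (Q := Q) (β := β) ℓ μ
  have hr : 0 < r := lt_of_le_of_ne (Real.sqrt_nonneg _) fun hr0 => by
    rw [← hr0, zero_mul] at h
    linarith
  have he : r⁻¹ • a ∈ euclUnitSphere n := by
    have hr2 : r ^ 2 = ∑ i, a i ^ 2 := Real.sq_sqrt (Finset.sum_nonneg fun i _ => sq_nonneg _)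
    simp only [euclUnitSphere, mem_ofPred_eq, Pi.smul_apply, smul_eq_mul, mul_pow,
      ← Finset.mul_sum, ← hr2]
    field_simp
  obtain ⟨J, hJ1, hJQ, u, hu, hlt⟩ := exists_lt_abs_dirDerivDot (div_nonneg hκ hr.le)
    (((div_lt_iff₀' hr).2 h).trans_le (rhoQ_le_derivSup μ he))
  have hΩpart : kappaQ Q β ℓ μ < |dirDerivDot J Ω a μ u| := by
    rw [dirDerivDot_smul, abs_mul, abs_of_pos (inv_pos.2 hr), ← div_eq_inv_mul,
      div_lt_div_iff_of_pos_right hr] at hlt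
    exact hlt
  have hβpart : |dirDerivDot J β (fun j => (ℓ j : ℝ)) μ u| ≤ kappaQ Q β ℓ μ :=
    le_derivSup hU hβ hμ _ hJ1 hJQ hu
  refine ⟨J, hJ1, hJQ, u, fun h0 => ?_⟩
  rw [dirDeriv_pairComb hU hΩ hβ hμ hJQ, add_eq_zero_iff_eq_neg] at h0
  rw [h0, abs_neg] at hΩpart
  linarith

end RhoKappa

theorem finite_setOf_forall_abs_le {ι : Type*} [Finite ι] (R : ℤ) :
    {k : ι → ℤ | ∀ i, |k i| ≤ R}.Finite :=
  (Set.Finite.pi fun _ => finite_Icc (-R) R).subset fun _ hk i _ => abs_le.1 (hk i)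

theorem finite_setOf_sum_abs_le {ι : Type*} [Fintype ι] (L : ℤ) :
    {ℓ : ι → ℤ | ∑ j, |ℓ j| ≤ L}.Finite :=
  (finite_setOf_forall_abs_le L).subset fun ℓ hℓ j =>
    (Finset.single_le_sum (fun i _ => abs_nonneg (ℓ i)) (Finset.mem_univ j)).trans hℓ

theorem finite_setOf_sqrt_sum_sq_le {ι : Type*} [Fintype ι] (R : ℝ) :
    {k : ι → ℤ | √(∑ i, (k i : ℝ) ^ 2) ≤ R}.Finite :=
  (finite_setOf_forall_abs_le ⌈R⌉).subset fun k hk i => by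
    have hki : |(k i : ℝ)| ≤ R := (Real.abs_le_sqrt
      (Finset.single_le_sum (fun j _ => sq_nonneg (k j : ℝ)) (Finset.mem_univ i))).trans hk
    exact_mod_cast hki.trans (Int.le_ceil R)

section Openness

variable {s n ν : ℕ} {U : Set (Fin s → ℝ)} {Q L : ℕ} {Ω : (Fin s → ℝ) → Fin n → ℝ}
  {β : (Fin s → ℝ) → Fin ν → ℝ}

theorem eventually_affineCondition (hU : IsOpen U) (hΩ : ContDiffOn ℝ Q Ω U)
    (hβ : ContDiffOn ℝ Q β U) {μ : Fin s → ℝ} (hμ : μ ∈ U) (hρ : 0 < rhoQ Q Ω μ)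
    (h : ∀ (k : Fin n → ℤ) (ℓ : Fin ν → ℤ), 1 ≤ ∑ j, |ℓ j| → ∑ j, |ℓ j| ≤ (L : ℤ) →
      √(∑ i, (k i : ℝ) ^ 2) ≤ kappaQ Q β ℓ μ / rhoQ Q Ω μ →
      HasNonzeroDirDeriv Q (pairComb (fun i => (k i : ℝ)) (fun j => (ℓ j : ℝ)) Ω β) μ) :
    ∀ᶠ μ' in 𝓝 μ, 0 < rhoQ Q Ω μ' ∧ ∀ (k : Fin n → ℤ) (ℓ : Fin ν → ℤ),
      1 ≤ ∑ j, |ℓ j| → ∑ j, |ℓ j| ≤ (L : ℤ) →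
      √(∑ i, (k i : ℝ) ^ 2) ≤ kappaQ Q β ℓ μ' / rhoQ Q Ω μ' →
      HasNonzeroDirDeriv Q (pairComb (fun i => (k i : ℝ)) (fun j => (ℓ j : ℝ)) Ω β) μ' := by
  set Λ := {ℓ : Fin ν → ℤ | 1 ≤ ∑ j, |ℓ j| ∧ ∑ j, |ℓ j| ≤ (L : ℤ)}
  have hΛ : Λ.Finite := (finite_setOf_sum_abs_le L).subset fun _ hℓ => hℓ.2
  set R := fun ℓ => (kappaQ Q β ℓ μ + 1) / (rhoQ Q Ω μ / 2)
  have hnondeg : ∀ k : Fin n → ℤ, ∀ ℓ ∈ Λ,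
      HasNonzeroDirDeriv Q (pairComb (fun i => (k i : ℝ)) (fun j => (ℓ j : ℝ)) Ω β) μ :=
    fun k ℓ hℓ => (le_or_gt _ _).elim (h k ℓ hℓ.1 hℓ.2)
      fun hlt => hasNonzeroDirDeriv_pairComb_of_lt hU hΩ hβ hμ ((div_lt_iff₀ hρ).1 hlt)
  have hρ' : ∀ᶠ μ' in 𝓝 μ, rhoQ Q Ω μ / 2 < rhoQ Q Ω μ' :=
    ((continuousOn_rhoQ hU hΩ).continuousAt (hU.mem_nhds hμ)).eventually
      (lt_mem_nhds (half_lt_self hρ))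
  have hκ' : ∀ᶠ μ' in 𝓝 μ, ∀ ℓ ∈ Λ, kappaQ Q β ℓ μ' < kappaQ Q β ℓ μ + 1 :=
    (eventually_all_finite hΛ).2 fun ℓ _ =>
      ((continuousOn_kappaQ hU hβ ℓ).continuousAt (hU.mem_nhds hμ)).eventually
        (gt_mem_nhds (lt_add_one _))
  have hk' : ∀ᶠ μ' in 𝓝 μ, ∀ ℓ ∈ Λ, ∀ k ∈ {k : Fin n → ℤ | √(∑ i, (k i : ℝ) ^ 2) ≤ R ℓ},
      HasNonzeroDirDeriv Q (pairComb (fun i => (k i : ℝ)) (fun j => (ℓ j : ℝ)) Ω β) μ' :=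
    (eventually_all_finite hΛ).2 fun ℓ hℓ =>
      (eventually_all_finite (finite_setOf_sqrt_sum_sq_le (R ℓ))).2 fun k _ =>
        (hnondeg k ℓ hℓ).eventually hU (contDiffOn_pairComb hΩ hβ _ _) hμ
  filter_upwards [hρ', hκ', hk'] with μ' hρμ' hκμ' hkμ'
  refine ⟨(half_pos hρ).trans hρμ', fun k ℓ h1 hL hk => hkμ' ℓ ⟨h1, hL⟩ k ?_⟩
  calc √(∑ i, (k i : ℝ) ^ 2) ≤ kappaQ Q β ℓ μ' / rhoQ Q Ω μ' := hk
    _ ≤ R ℓ := div_le_div₀ (by linarith [kappaQ_nonneg (Q := Q) (β := β) ℓ μ])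
        (hκμ' ℓ ⟨h1, hL⟩).le (half_pos hρ) hρμ'.le

theorem eventually_kappaQ_pos (hU : IsOpen U) (hβ : ContDiffOn ℝ Q β U) {μ : Fin s → ℝ}
    (hμ : μ ∈ U)
    (h : ∀ ℓ : Fin ν → ℤ, 1 ≤ ∑ j, |ℓ j| → ∑ j, |ℓ j| ≤ (L : ℤ) → 0 < kappaQ Q β ℓ μ) :
    ∀ᶠ μ' in 𝓝 μ, ∀ ℓ : Fin ν → ℤ, 1 ≤ ∑ j, |ℓ j| → ∑ j, |ℓ j| ≤ (L : ℤ) →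
      0 < kappaQ Q β ℓ μ' := by
  have hΛ : {ℓ : Fin ν → ℤ | 1 ≤ ∑ j, |ℓ j| ∧ ∑ j, |ℓ j| ≤ (L : ℤ)}.Finite :=
    (finite_setOf_sum_abs_le L).subset fun _ hℓ => hℓ.2
  filter_upwards [(eventually_all_finite hΛ).2 fun ℓ hℓ =>
    ((continuousOn_kappaQ hU hβ ℓ).continuousAt (hU.mem_nhds hμ)).eventually
      (lt_mem_nhds (h ℓ hℓ.1 hℓ.2))] with μ' hμ' ℓ h1 hL
  exact hμ' ℓ ⟨h1, hL⟩

end Openness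

theorem affNondeg_is_open_general
    (s n ν Q L : ℕ)
    (𝔄 : Set (Fin s → ℝ)) (h𝔄 : IsOpen 𝔄)
    (Ω : (Fin s → ℝ) → Fin n → ℝ) (β : (Fin s → ℝ) → Fin ν → ℝ)
    (hΩ : ContDiffOn ℝ (Q : ℕ∞) Ω 𝔄) (hβ : ContDiffOn ℝ (Q : ℕ∞) β 𝔄) :
    (∀ μ ∈ 𝔄, AffNondegAt Q L Ω β μ →
      ∀ᶠ μ' in nhds μ, μ' ∈ 𝔄 → AffNondegAt Q L Ω β μ') ∧
    IsOpen {μ | μ ∈ 𝔄 ∧ AffNondegAt Q L Ω β μ} := by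
  have hnondeg : ∀ μ ∈ 𝔄, AffNondegAt Q L Ω β μ → ∀ᶠ μ' in 𝓝 μ, AffNondegAt Q L Ω β μ' := by
    intro μ hμ hμnd
    rcases hμnd with ⟨hn, hν, hρ, hcond⟩ | ⟨hn, hν, hρ⟩ | ⟨hn, hν, hκ⟩ | hnν
    · filter_upwards [eventually_affineCondition h𝔄 hΩ hβ hμ hρ hcond] with μ' h
      exact Or.inl ⟨hn, hν, h⟩
    · filter_upwards [((continuousOn_rhoQ h𝔄 hΩ).continuousAt (h𝔄.mem_nhds hμ)).eventually
        (lt_mem_nhds hρ)] with μ' h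
      exact Or.inr (Or.inl ⟨hn, hν, h⟩)
    · filter_upwards [eventually_kappaQ_pos h𝔄 hβ hμ hκ] with μ' h
      exact Or.inr (Or.inr (Or.inl ⟨hn, hν, h⟩))
    · exact .of_forall fun _ => Or.inr (Or.inr (Or.inr hnν))
  refine ⟨fun μ hμ h => (hnondeg μ hμ h).mono fun _ h _ => h, isOpen_iff_mem_nhds.2 ?_⟩
  rintro μ ⟨hμ, h⟩
  filter_upwards [h𝔄.mem_nhds hμ, hnondeg μ hμ h] with μ' h1 h2 using ⟨h1, h2⟩

/-- affine `(Q,L)`-nondegeneracy of a pair of `C^Q` mappings is an open condition: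
if it holds at `μ ∈ 𝔄`, it holds at every `μ' ∈ 𝔄` sufficiently close to `μ`; equivalently,
the set of points of `𝔄` where it holds is open. -/
theorem affNondeg_is_open
    (s n ν Q L : ℕ) (hs : 0 < s) (hQ : 0 < Q) (hL : 0 < L)
    (𝔄 : Set (Fin s → ℝ)) (h𝔄 : IsOpen 𝔄)
    (Ω : (Fin s → ℝ) → Fin n → ℝ) (β : (Fin s → ℝ) → Fin ν → ℝ)
    (hΩ : ContDiffOn ℝ (Q : ℕ∞) Ω 𝔄) (hβ : ContDiffOn ℝ (Q : ℕ∞) β 𝔄) :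
    (∀ μ ∈ 𝔄, AffNondegAt Q L Ω β μ →
      ∀ᶠ μ' in nhds μ, μ' ∈ 𝔄 → AffNondegAt Q L Ω β μ') ∧
    IsOpen {μ | μ ∈ 𝔄 ∧ AffNondegAt Q L Ω β μ} :=
  affNondeg_is_open_general s n ν Q L 𝔄 h𝔄 Ω β hΩ hβ
end

section
/- Let d₁ ∈ ℕ, d₃ ∈ ℤ₊, d ∈ ℕ with d ≥ d₁ + d₃, let B̃ ⊂ ℝ^d be a closed ball, and fix τ⁎ > d₁ − 1. For b ∈ ℝ^d write b^{:1} = (b₁,…,b_{d₁}) ∈ ℝ^{d₁} and b^{:3} = (b_{d−d₃+1},…,b_d) ∈ ℝ^{d₃}. Then the Lebesgue measure meas_d of the set of those points b ∈ B̃ for which the pair of vectors (b^{:1}, b^{:3}) is NOT affinely (τ⁎,γ⁎,2)-Diophantine tends to 0 as γ⁎ → 0⁺. Moreover, if d₁ = 0 this set is empty for any τ⁎ ≥ 0 and γ⁎ > 0. -/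
/-!
If `(b^{:1}, b^{:3})` is not affinely `(τ, γ, 2)`-Diophantine, then `b` lies in a slab
`|⟨b^{:1}, k⟩ + ⟨b^{:3}, ℓ⟩| < γ |k|^{-τ}` for some `k ≠ 0` and `|ℓ| ≤ 2`. The coordinates of
`b^{:1}` and `b^{:3}` are distinct, so slicing along a coordinate `i` with `|k_i| = ‖k‖_∞` (Fubini)
shows that each slab meets the ball in measure `O(γ ‖k‖_∞^{-(τ+1)})`. Since `τ + 1 > d₁`, these
bounds are summable over `k ∈ ℤ^{d₁}`, so the bad set has measure `O(γ)`.
-/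

open scoped BigOperators
open MeasureTheory Filter

def AffinelyDiophantine {n ν : ℕ} (τ γ : ℝ) (L : ℕ) (Ω : Fin n → ℝ) (β : Fin ν → ℝ) : Prop :=
  ∀ k : Fin n → ℤ, k ≠ 0 → ∀ ℓ : Fin ν → ℤ, (∑ j, |ℓ j|) ≤ (L : ℤ) →
    |(∑ i, Ω i * (k i : ℝ)) + ∑ j, β j * (ℓ j : ℝ)| ≥ γ * (∑ i, |(k i : ℝ)|) ^ (-τ)

def firstPart (d₁ d : ℕ) (h : d₁ ≤ d) (b : Fin d → ℝ) : Fin d₁ → ℝ :=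
  fun i => b (Fin.castLE h i)

def lastPart (d₃ d : ℕ) (h : d₃ ≤ d) (b : Fin d → ℝ) : Fin d₃ → ℝ :=
  fun j => b ⟨d - d₃ + j.1, by have := j.isLt; omega⟩

open Metric

theorem Real.volume_setOf_abs_mul_add_lt {a : ℝ} (ha : a ≠ 0) (c w : ℝ) :
    volume {x : ℝ | |a * x + c| < w} = ENNReal.ofReal (2 * w / |a|) := by
  have hset : {x : ℝ | |a * x + c| < w} = (fun x => a * x) ⁻¹' ball (-c) w := by
    ext x; simp [Real.dist_eq]
  rw [hset, Real.volume_preimage_mul_left ha, Real.volume_ball,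
    ← ENNReal.ofReal_mul (by positivity), abs_inv, inv_mul_eq_div]

theorem volume_prod_setOf_abs_mul_add_lt {β : Type*} [MeasurableSpace β] (ν : Measure β) [SFinite ν]
    {S : Set β} (hS : MeasurableSet S) {g : β → ℝ} (hg : Measurable g) {a : ℝ} (ha : a ≠ 0)
    (w : ℝ) :
    (volume.prod ν) {p : ℝ × β | p.2 ∈ S ∧ |a * p.1 + g p.2| < w} =
      ENNReal.ofReal (2 * w / |a|) * ν S := by
  have hmeas : MeasurableSet {p : ℝ × β | p.2 ∈ S ∧ |a * p.1 + g p.2| < w} :=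
    (measurable_snd hS).inter
      (measurableSet_lt ((measurable_const.mul measurable_fst).add (hg.comp measurable_snd)).abs
        measurable_const)
  rw [Measure.prod_apply_symm hmeas, ← lintegral_indicator_const hS]
  congr 1 with y
  by_cases hy : y ∈ S <;> simp [hy, Real.volume_setOf_abs_mul_add_lt ha]

theorem volume_removeNth_mem_and_abs_lt {m : ℕ} (i : Fin (m + 1)) {S : Set (Fin m → ℝ)}
    (hS : MeasurableSet S) {F : (Fin (m + 1) → ℝ) → ℝ} (hF : Measurable F) {a : ℝ} (ha : a ≠ 0)
    (hFa : ∀ b, F b = a * b i + F (Function.update b i 0)) (w : ℝ) :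
    volume {b | (i.removeNth b : Fin m → ℝ) ∈ S ∧ |F b| < w} =
      ENNReal.ofReal (2 * w / |a|) * volume S := by
  set g : (Fin m → ℝ) → ℝ := fun y => F (i.insertNth 0 y)
  have hset : {b | (i.removeNth b : Fin m → ℝ) ∈ S ∧ |F b| < w} =
      MeasurableEquiv.piFinSuccAbove (fun _ => ℝ) i ⁻¹'
        {p : ℝ × (Fin m → ℝ) | p.2 ∈ S ∧ |a * p.1 + g p.2| < w} := by
    ext b
    simp [g, Fin.insertNth_removeNth, ← hFa]
  rw [hset, (volume_preserving_piFinSuccAbove (fun _ => ℝ) i).measure_preimage_equiv,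
    Measure.volume_eq_prod,
    volume_prod_setOf_abs_mul_add_lt volume hS (g := g) (hF.comp (by fun_prop)) ha]

theorem Int.summable_pi_norm_rpow_neg {ι : Type*} [Fintype ι] {σ : ℝ} (hσ : Fintype.card ι < σ) :
    Summable fun k : ι → ℤ => ‖k‖ ^ (-σ) := by
  let L := Submodule.span ℤ (Set.range (Pi.basisFun ℝ ι))
  have : DiscreteTopology L := ZSpan.discreteTopology_pi_basisFun
  have hrank : Module.finrank ℤ L = Fintype.card ι := by
    rw [ZLattice.rank ℝ L, Module.finrank_fintype_fun_eq_card]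
  have hmem (k : ι → ℤ) : (fun i => (k i : ℝ)) ∈ L :=
    ((Pi.basisFun ℝ ι).mem_span_iff_repr_mem ℤ _).mpr fun i => ⟨k i, by simp⟩
  let toLattice : (ι → ℤ) → L := fun k => ⟨fun i => k i, hmem k⟩
  have hinj : Function.Injective toLattice := fun k k' h => by
    funext i; simpa [toLattice] using congrFun (congrArg Subtype.val h) i
  refine ((ZLattice.summable_norm_rpow L (-σ) (by rw [hrank]; linarith)).comp_injective
    hinj).congr fun k => ?_
  simp only [toLattice, Submodule.coe_norm, Pi.norm_def]
  -- the norm on `ℤ` is defined through the cast to `ℝ`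
  rfl

theorem exists_pi_norm_eq_norm_apply {ι E : Type*} [Fintype ι] [Nonempty ι]
    [SeminormedAddGroup E] (f : ι → E) : ∃ i, ‖f‖ = ‖f i‖ := by
  obtain ⟨i, -, hi⟩ := Finset.univ.exists_max_image (‖f ·‖) Finset.univ_nonempty
  exact ⟨i, le_antisymm ((pi_norm_le_iff_of_nonneg (norm_nonneg _)).2 fun j => hi j (by simp))
    (norm_le_pi_norm f i)⟩

theorem pi_norm_le_sum_norm {ι E : Type*} [Fintype ι] [SeminormedAddGroup E] (f : ι → E) :
    ‖f‖ ≤ ∑ i, ‖f i‖ :=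
  (pi_norm_le_iff_of_nonneg (by positivity)).2 fun i =>
    Finset.single_le_sum (f := (‖f ·‖)) (fun _ _ => norm_nonneg _) (Finset.mem_univ i)

theorem sum_mul_eq_mul_add_sum_update {ι R : Type*} [Fintype ι] [DecidableEq ι]
    [NonUnitalNonAssocSemiring R] (f g : ι → R) (i : ι) :
    ∑ j, f j * g j = f i * g i + ∑ j, Function.update f i 0 j * g j := by
  rw [← Finset.add_sum_erase _ _ (Finset.mem_univ i),
    ← Finset.add_sum_erase _ (fun j => Function.update f i 0 j * g j) (Finset.mem_univ i)]
  simp only [Function.update_self, zero_mul, zero_add]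
  congr 1
  refine Finset.sum_congr rfl fun j hj => ?_
  rw [Function.update_of_ne (Finset.ne_of_mem_erase hj)]

def affineForm {n ν : ℕ} (Ω : Fin n → ℝ) (β : Fin ν → ℝ) (k : Fin n → ℤ) (ℓ : Fin ν → ℤ) : ℝ :=
  (∑ i, Ω i * (k i : ℝ)) + ∑ j, β j * (ℓ j : ℝ)

theorem not_affinelyDiophantine_iff {n ν : ℕ} {τ γ : ℝ} {L : ℕ} {Ω : Fin n → ℝ}
    {β : Fin ν → ℝ} :
    ¬ AffinelyDiophantine τ γ L Ω β ↔ ∃ k ≠ 0, ∃ ℓ : Fin ν → ℤ, (∑ j, |ℓ j|) ≤ (L : ℤ) ∧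
      |affineForm Ω β k ℓ| < γ * (∑ i, |(k i : ℝ)|) ^ (-τ) := by
  simp [AffinelyDiophantine, affineForm]

theorem affinelyDiophantine_of_fin_zero {ν : ℕ} (τ γ : ℝ) (L : ℕ) (Ω : Fin 0 → ℝ)
    (β : Fin ν → ℝ) : AffinelyDiophantine τ γ L Ω β :=
  fun k hk => absurd (Subsingleton.elim k 0) hk

theorem mem_closedBall_abs_of_sum_sq_sub_le {ι : Type*} [Fintype ι] {b c : ι → ℝ} {r : ℝ}
    (h : ∑ i, (b i - c i) ^ 2 ≤ r ^ 2) : b ∈ closedBall c |r| :=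
  mem_closedBall.2 <| (dist_pi_le_iff (abs_nonneg r)).2 fun i => by
    rw [Real.dist_eq, ← sq_le_sq]
    exact (Finset.single_le_sum (f := fun i => (b i - c i) ^ 2) (fun _ _ => sq_nonneg _)
      (Finset.mem_univ i)).trans h

section

variable {d₁ d₃ d : ℕ} (h1 : d₁ ≤ d) (h3 : d₃ ≤ d)

theorem affineForm_eq_mul_add_affineForm_update (hd : d₁ + d₃ ≤ d) (k : Fin d₁ → ℤ)
    (ℓ : Fin d₃ → ℤ) (i : Fin d₁) (b : Fin d → ℝ) :
    affineForm (firstPart d₁ d h1 b) (lastPart d₃ d h3 b) k ℓ =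
      k i * b (Fin.castLE h1 i) +
        affineForm (firstPart d₁ d h1 (Function.update b (Fin.castLE h1 i) 0))
          (lastPart d₃ d h3 (Function.update b (Fin.castLE h1 i) 0)) k ℓ := by
  have hfirst : firstPart d₁ d h1 (Function.update b (Fin.castLE h1 i) 0) =
      Function.update (firstPart d₁ d h1 b) i 0 := by
    funext j
    simp [firstPart, Function.update_apply, Fin.castLE_inj]
  have hlast : lastPart d₃ d h3 (Function.update b (Fin.castLE h1 i) 0) = lastPart d₃ d h3 b := by
    funext j
    refine Function.update_of_ne (Fin.ne_of_val_ne ?_) _ _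
    simp only [Fin.val_castLE]
    omega
  rw [hfirst, hlast, affineForm, affineForm, sum_mul_eq_mul_add_sum_update _ _ i]
  simp only [firstPart]
  ring

theorem measurable_affineForm (k : Fin d₁ → ℤ) (ℓ : Fin d₃ → ℤ) :
    Measurable fun b => affineForm (firstPart d₁ d h1 b) (lastPart d₃ d h3 b) k ℓ := by
  unfold affineForm firstPart lastPart
  fun_prop

end

section

variable {d₁ d₃ m : ℕ} (h1 : d₁ ≤ m + 1) (h3 : d₃ ≤ m + 1)

theorem volume_closedBall_abs_affineForm_lt_le (hd : d₁ + d₃ ≤ m + 1) {τ : ℝ} (hτ : 0 ≤ τ)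
    {k : Fin d₁ → ℤ} (hk : k ≠ 0) (ℓ : Fin d₃ → ℤ) (c : Fin (m + 1) → ℝ) {R : ℝ} (hR : 0 ≤ R)
    {γ : ℝ} (hγ : 0 ≤ γ) :
    volume {b | b ∈ closedBall c R ∧
        |affineForm (firstPart d₁ (m + 1) h1 b) (lastPart d₃ (m + 1) h3 b) k ℓ| <
          γ * (∑ i, |(k i : ℝ)|) ^ (-τ)} ≤
      ENNReal.ofReal (2 * γ * ‖k‖ ^ (-(τ + 1)) * (2 * R) ^ m) := by
  have : Nonempty (Fin d₁) := by
    by_contra h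
    exact hk (funext fun i => (h ⟨i⟩).elim)
  obtain ⟨i, hi⟩ := exists_pi_norm_eq_norm_apply k
  have hk0 : 0 < ‖k‖ := norm_pos_iff.2 hk
  have hki : (k i : ℝ) ≠ 0 := by
    rw [hi, norm_pos_iff] at hk0
    exact_mod_cast hk0
  have hwidth : (∑ i, |(k i : ℝ)|) ^ (-τ) ≤ ‖k‖ ^ (-τ) :=
    Real.rpow_le_rpow_of_nonpos hk0 (by simpa [Int.norm_eq_abs] using pi_norm_le_sum_norm k)
      (by linarith)
  set I := Fin.castLE h1 i
  calc _ ≤ volume {b | (I.removeNth b : Fin m → ℝ) ∈ closedBall (I.removeNth c) R ∧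
        |affineForm (firstPart d₁ (m + 1) h1 b) (lastPart d₃ (m + 1) h3 b) k ℓ| <
          γ * ‖k‖ ^ (-τ)} := by
        refine measure_mono fun b ⟨hb, hlt⟩ => ⟨?_, ?_⟩
        · exact mem_closedBall.2 ((dist_pi_le_iff hR).2 fun j =>
            (dist_pi_le_iff hR).1 (mem_closedBall.1 hb) _)
        · exact hlt.trans_le (mul_le_mul_of_nonneg_left hwidth hγ)
    _ = _ := volume_removeNth_mem_and_abs_lt I measurableSet_closedBall
          (measurable_affineForm h1 h3 k ℓ) hki
          (affineForm_eq_mul_add_affineForm_update h1 h3 hd k ℓ i) _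
    _ = _ := by
        have habs : |(k i : ℝ)| = ‖k‖ := by rw [hi, Int.norm_eq_abs]
        rw [Real.volume_pi_closedBall _ hR, Fintype.card_fin, ← ENNReal.ofReal_mul (by positivity),
          habs, show -(τ + 1) = -τ - 1 by ring, Real.rpow_sub_one hk0.ne']
        ring_nf

theorem volume_not_affinelyDiophantine_le (hd : d₁ + d₃ ≤ m + 1) {τ : ℝ} (hτ : 0 ≤ τ) (L : ℕ)
    (c : Fin (m + 1) → ℝ) (r : ℝ) {γ : ℝ} (hγ : 0 ≤ γ) :
    volume {b : Fin (m + 1) → ℝ | (∑ i, (b i - c i) ^ 2) ≤ r ^ 2 ∧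
        ¬ AffinelyDiophantine τ γ L (firstPart d₁ (m + 1) h1 b) (lastPart d₃ (m + 1) h3 b)} ≤
      ENNReal.ofReal γ * ((2 * L + 1) ^ d₃ * ENNReal.ofReal (2 * (2 * |r|) ^ m) *
        ∑' k : Fin d₁ → ℤ, ENNReal.ofReal (‖k‖ ^ (-(τ + 1)))) := by
  set Lf := Fintype.piFinset fun _ : Fin d₃ => Finset.Icc (-(L : ℤ)) L
  have hLf : (Lf.card : ENNReal) = (2 * L + 1) ^ d₃ := by
    simp only [Lf, Fintype.card_piFinset, Int.card_Icc, Finset.prod_const, Finset.card_univ,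
      Fintype.card_fin, sub_neg_eq_add]
    rw [show ((L : ℤ) + 1 + L).toNat = 2 * L + 1 by omega]
    push_cast
    rfl
  calc _ ≤ volume (⋃ k : Fin d₁ → ℤ, ⋃ (_ : k ≠ 0), ⋃ ℓ ∈ Lf, {b | b ∈ closedBall c |r| ∧
          |affineForm (firstPart d₁ (m + 1) h1 b) (lastPart d₃ (m + 1) h3 b) k ℓ| <
            γ * (∑ i, |(k i : ℝ)|) ^ (-τ)}) := by
        refine measure_mono fun b ⟨hball, hnd⟩ => ?_
        obtain ⟨k, hk, ℓ, hℓ, hlt⟩ := not_affinelyDiophantine_iff.1 hnd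
        have hℓLf : ℓ ∈ Lf := Fintype.mem_piFinset.2 fun j => Finset.mem_Icc.2 <| abs_le.1 <|
          (Finset.single_le_sum (f := fun j => |ℓ j|) (fun _ _ => abs_nonneg _)
            (Finset.mem_univ j)).trans hℓ
        simp only [Set.mem_iUnion]
        exact ⟨k, hk, ℓ, hℓLf, mem_closedBall_abs_of_sum_sq_sub_le hball, hlt⟩
    _ ≤ ∑' k : Fin d₁ → ℤ, ∑ _ℓ ∈ Lf,
          ENNReal.ofReal (2 * γ * ‖k‖ ^ (-(τ + 1)) * (2 * |r|) ^ m) := by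
        refine (measure_iUnion_le _).trans (ENNReal.tsum_le_tsum fun k => ?_)
        by_cases hk : k = 0
        · simp [hk]
        · simp only [hk, ne_eq, not_false_eq_true, Set.iUnion_true]
          exact (measure_biUnion_finset_le _ _).trans (Finset.sum_le_sum fun ℓ _ =>
            volume_closedBall_abs_affineForm_lt_le h1 h3 hd hτ hk ℓ c (abs_nonneg r) hγ)
    _ = _ := by
        simp only [Finset.sum_const, nsmul_eq_mul, hLf]
        rw [← ENNReal.tsum_mul_left, ← ENNReal.tsum_mul_left]
        congr 1 with k
        rw [show 2 * γ * ‖k‖ ^ (-(τ + 1)) * (2 * |r|) ^ m =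
            γ * (2 * (2 * |r|) ^ m * ‖k‖ ^ (-(τ + 1))) by ring,
          ENNReal.ofReal_mul hγ, ENNReal.ofReal_mul (by positivity)]
        ring

end

theorem measure_not_affinelyDiophantine_tendsto_zero_general
    (d₁ d₃ d : ℕ) (hd : d₁ + d₃ ≤ d) (h1 : d₁ ≤ d) (h3 : d₃ ≤ d)
    (c : Fin d → ℝ) (r : ℝ) :
    (∀ τs : ℝ, (d₁ : ℝ) - 1 < τs → 0 < d₁ →
      Tendsto
        (fun γs : ℝ =>
          volume {b : Fin d → ℝ | (∑ i, (b i - c i) ^ 2) ≤ r ^ 2 ∧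
            ¬ AffinelyDiophantine τs γs 2 (firstPart d₁ d h1 b) (lastPart d₃ d h3 b)})
        (nhdsWithin 0 (Set.Ioi 0)) (nhds 0)) ∧
    (d₁ = 0 → ∀ τs : ℝ, 0 ≤ τs → ∀ γs : ℝ, 0 < γs →
      {b : Fin d → ℝ | (∑ i, (b i - c i) ^ 2) ≤ r ^ 2 ∧
        ¬ AffinelyDiophantine τs γs 2 (firstPart d₁ d h1 b) (lastPart d₃ d h3 b)} = ∅) := by
  refine ⟨fun τs hτ hd₁ => ?_, fun hd₁ τs _ γs _ => ?_⟩
  · obtain ⟨m, rfl⟩ : ∃ m, d = m + 1 := ⟨d - 1, by omega⟩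
    have hd₁_one : (1 : ℝ) ≤ d₁ := by exact_mod_cast hd₁
    have hsum : ∑' k : Fin d₁ → ℤ, ENNReal.ofReal (‖k‖ ^ (-(τs + 1))) ≠ ⊤ := by
      rw [← ENNReal.ofReal_tsum_of_nonneg (fun _ => by positivity)
        (Int.summable_pi_norm_rpow_neg (by rw [Fintype.card_fin]; linarith))]
      exact ENNReal.ofReal_ne_top
    set C : ENNReal := (2 * (2 : ℕ) + 1) ^ d₃ * ENNReal.ofReal (2 * (2 * |r|) ^ m) *
        ∑' k : Fin d₁ → ℤ, ENNReal.ofReal (‖k‖ ^ (-(τs + 1)))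
    have hC : C ≠ ⊤ := ENNReal.mul_ne_top
      (ENNReal.mul_ne_top (ENNReal.pow_ne_top (by norm_num)) ENNReal.ofReal_ne_top) hsum
    have hlim : Tendsto (fun γ => ENNReal.ofReal γ * C) (nhdsWithin 0 (Set.Ioi 0)) (nhds 0) := by
      simpa using ENNReal.Tendsto.mul_const
        ((ENNReal.continuous_ofReal.tendsto 0).mono_left nhdsWithin_le_nhds) (Or.inr hC)
    refine tendsto_of_tendsto_of_tendsto_of_le_of_le' tendsto_const_nhds hlim
      (Eventually.of_forall fun _ => zero_le) ?_
    filter_upwards [self_mem_nhdsWithin] with γ hγ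
    exact volume_not_affinelyDiophantine_le h1 h3 hd (by linarith) 2 c r (le_of_lt hγ)
  · subst hd₁
    ext b
    simp [affinelyDiophantine_of_fin_zero]

/-- for a fixed closed ball `B̃ ⊂ ℝ^d` and fixed `τ⁎ > d₁ - 1` (with `d₁ ≥ 1`,
`d₁ + d₃ ≤ d`), the Lebesgue measure of the set of points `b ∈ B̃` for which the pair
`(b^{:1}, b^{:3})` of the first `d₁` and last `d₃` components of `b` is NOT affinely
`(τ⁎,γ⁎,2)`-Diophantine tends to `0` as `γ⁎ → 0⁺`.  Moreover, if `d₁ = 0`, the corresponding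
set is empty for all `τ⁎ ≥ 0` and `γ⁎ > 0`. -/
theorem measure_not_affinelyDiophantine_tendsto_zero
    (d₁ d₃ d : ℕ) (hd : d₁ + d₃ ≤ d) (h1 : d₁ ≤ d) (h3 : d₃ ≤ d)
    (c : Fin d → ℝ) (r : ℝ) (hr : 0 < r) :
    (∀ τs : ℝ, (d₁ : ℝ) - 1 < τs → 0 < d₁ →
      Tendsto
        (fun γs : ℝ =>
          volume {b : Fin d → ℝ | (∑ i, (b i - c i) ^ 2) ≤ r ^ 2 ∧
            ¬ AffinelyDiophantine τs γs 2 (firstPart d₁ d h1 b) (lastPart d₃ d h3 b)})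
        (nhdsWithin 0 (Set.Ioi 0)) (nhds 0)) ∧
    (d₁ = 0 → ∀ τs : ℝ, 0 ≤ τs → ∀ γs : ℝ, 0 < γs →
      {b : Fin d → ℝ | (∑ i, (b i - c i) ^ 2) ≤ r ^ 2 ∧
        ¬ AffinelyDiophantine τs γs 2 (firstPart d₁ d h1 b) (lastPart d₃ d h3 b)} = ∅) :=
  measure_not_affinelyDiophantine_tendsto_zero_general d₁ d₃ d hd h1 h3 c r
end
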